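/- arXiv:2007.09540 — 6 statements merged into one kernel-verified Lean document; each statement's English description precedes it below -/
import Mathlib

section
/- (Gibbard 1973, game-form version, underlying the paper's Theorem 2.) Let X be a finite set of outcomes, let each of N players i have a nonempty strategy set S_i, and let g : S_1 × ⋯ × S_N → X be a game form. Say g is straightforward if for every profile of strict linear orders (≻_1, …, ≻_N) on X, every player i has a dominant strategy s_i^*, i.e., for all s_{-i} and all s_i, g(s_i^*, s_{-i}) ≻_i g(s_i, s_{-i}) or g(s_i^*, s_{-i}) = g(s_i, s_{-i}). If g is straightforward and the range of g contains at least 3 outcomes, then g is dictatorial: there exists a player i such that for every x in the range of g there exists s_i ∈ S_i with g(s_i, s_{-i}) = x for all s_{-i}. -/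
/-!
Fix, for every player and every utility `u : X → ℕ` (ties broken by a linear order of `X`), a
dominant strategy `σᵢ u`. Reporting utilities and playing the corresponding dominant strategies
turns `g` into a social choice function `F` on utility profiles that is strategy-proof and has
the same range as `g` (revelation principle). By the Gibbard–Satterthwaite theorem some player `i`
is a dictator for `F`. Then `σᵢ` of the utility that puts `x` alone on top forces `x`: against any
`s`, let the others switch to dominant strategies for "the current outcome `y` on top"; the
outcome stays `y`, while the dictator obtains `x`.

For Gibbard–Satterthwaite, strategy-proofness makes `F` Maskin monotonic. Call `S` decisive for
`a` over `b` if `F` picks `a` when everybody ranks `{a, b}` on top and exactly `S` puts `a` first.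
Three-outcome Condorcet-cycle profiles show that a coalition decisive for one pair is decisive
for every pair, and that a decisive coalition either has a decisive singleton or loses one member
and stays decisive; a strong induction on coalitions yields a decisive player, i.e. a dictator.
-/

open Function Set

namespace SocialChoice

section Walk

variable {ι : Type*} [DecidableEq ι] {β : ι → Type*} {α : Type*}

theorem eq_of_forall_update_eq [Fintype ι] {F : (∀ i, β i) → α} {U V : ∀ i, β i} {w : α}
    (step : ∀ W i, (∀ j, W j = U j ∨ W j = V j) → F W = w → F (update W i (V i)) = w)
    (hU : F U = w) : F V = w := by
  have key : ∀ s : Finset ι, F (s.piecewise V U) = w := by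
    intro s
    induction s using Finset.induction_on with
    | empty => simpa using hU
    | insert j s _ ih =>
      rw [Finset.piecewise_insert]
      exact step _ j (fun k => by by_cases hk : k ∈ s <;> simp [hk]) ih
  simpa using key Finset.univ

end Walk

theorem exists_mem_ne_ne_of_three_le_ncard {α : Type*} {s : Set α} (hs : 3 ≤ s.ncard)
    (a b : α) : ∃ c ∈ s, c ≠ a ∧ c ≠ b := by
  obtain ⟨c, hc, hca⟩ := exists_ne_of_one_lt_ncard (s := s \ {b})
    (by have := pred_ncard_le_ncard_sdiff_singleton s b; omega) a
  exact ⟨c, hc.1, hca, hc.2⟩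

section Preference

variable {X : Type*} [LinearOrder X]

/-- Ties in `u` are broken by the order of `X`, so that every utility yields a strict linear
order. -/
def Prefers (u : X → ℕ) (a b : X) : Prop := toLex (u b, b) < toLex (u a, a)

variable {u : X → ℕ} {a b : X}

theorem prefers_of_lt (h : u b < u a) : Prefers u a b := Prod.Lex.toLex_lt_toLex.2 (Or.inl h)

theorem Prefers.le (h : Prefers u a b) : u b ≤ u a :=
  (Prod.Lex.toLex_lt_toLex.1 h).elim le_of_lt fun h => h.1.le

theorem Prefers.ne (h : Prefers u a b) : a ≠ b := by
  rintro rfl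
  exact lt_irrefl _ h

theorem Prefers.asymm (h : Prefers u a b) : ¬Prefers u b a := lt_asymm h

theorem prefers_of_not_prefers (hab : a ≠ b) (h : ¬Prefers u b a) : Prefers u a b := by
  refine (not_lt.1 h).lt_of_ne fun e => hab ?_
  exact (congrArg Prod.snd (toLex.injective e)).symm

theorem isStrictTotalOrder_prefers (u : X → ℕ) : IsStrictTotalOrder X (Prefers u) where
  trichotomous _ _ hab hba := by_contra fun hne => hab (prefers_of_not_prefers hne hba)
  irrefl _ h := h.ne rfl
  trans _ _ _ hab hbc := hbc.trans hab

theorem not_prefers_single (x : X) : ¬Prefers (Pi.single b 1) x b := by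
  intro h
  rcases eq_or_ne x b with rfl | hxb
  · exact h.ne rfl
  · simpa [Pi.single_apply, hxb] using h.le

end Preference

section Rankings

variable {X : Type*} [DecidableEq X]

def topTwo (a b : X) : X → ℕ := fun t => if t = a then 2 else if t = b then 1 else 0

def topThree (a b c : X) : X → ℕ :=
  fun t => if t = a then 3 else if t = b then 2 else if t = c then 1 else 0

theorem topThree_pos_iff {a b c t : X} : 0 < topThree a b c t ↔ t = a ∨ t = b ∨ t = c := by
  simp only [topThree]
  split_ifs <;> simp_all

end Rankings

section SocialChoiceFunction

variable {X : Type*} [LinearOrder X] {ι : Type*} [DecidableEq ι]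

def StrategyProof (f : (ι → X → ℕ) → X) : Prop :=
  ∀ U i u', ¬Prefers (U i) (f (update U i u')) (f U)

def IsDictator (f : (ι → X → ℕ) → X) (i : ι) : Prop :=
  ∀ U, ∀ b ∈ range f, ¬Prefers (U i) b (f U)

def pairProfile (S : Finset ι) (a b : X) : ι → X → ℕ :=
  fun i => if i ∈ S then topTwo a b else topTwo b a

/-- Decisiveness of `S` for `a` over `b`, tested at the single profile `pairProfile S a b`;
`StrategyProof.decisive_of_eq` shows that for a strategy-proof `f` this is as strong as the usual
notion. -/
def Decisive (f : (ι → X → ℕ) → X) (S : Finset ι) (a b : X) : Prop :=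
  f (pairProfile S a b) = a

variable [Fintype ι]

theorem pairProfile_compl (S : Finset ι) (a b : X) :
    pairProfile Sᶜ b a = pairProfile S a b := by
  funext i
  simp [pairProfile]

variable {f : (ι → X → ℕ) → X} {S : Finset ι} {a b : X}

theorem Decisive.not_compl (hab : a ≠ b) (h : Decisive f S a b) : ¬Decisive f Sᶜ b a := by
  rw [Decisive, pairProfile_compl, h]
  exact hab

namespace StrategyProof

theorem maskin_monotone (hf : StrategyProof f) {U V : ι → X → ℕ} {w : X} (hU : f U = w)
    (hUV : ∀ i t, Prefers (U i) w t → Prefers (V i) w t) : f V = w := by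
  refine eq_of_forall_update_eq (fun W i hW hWw => ?_) hU
  by_contra hne
  have hgain : Prefers (W i) w (f (update W i (V i))) :=
    prefers_of_not_prefers (Ne.symm hne) (hWw ▸ hf W i (V i))
  have hback := hf (update W i (V i)) i (W i)
  rw [update_idem, update_eq_self, update_self, hWw] at hback
  rcases hW i with hWi | hWi
  · exact hback (hUV i _ (hWi ▸ hgain))
  · exact hback (hWi ▸ hgain)

theorem eq_of_forall_prefers (hf : StrategyProof f) {U : ι → X → ℕ} (ha : a ∈ range f)
    (h : ∀ i t, t ≠ a → Prefers (U i) a t) : f U = a := by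
  obtain ⟨U₀, rfl⟩ := ha
  exact hf.maskin_monotone rfl fun i t ht => h i t ht.ne.symm

theorem mem_of_forall_prefers_compl (hf : StrategyProof f) {B : Set X} (haB : a ∈ B)
    (ha : a ∈ range f) {U : ι → X → ℕ} (hU : ∀ i, ∀ b ∈ B, ∀ t ∉ B, Prefers (U i) b t) :
    f U ∈ B := by
  by_contra hw
  have hV : f (fun _ => topTwo a (f U)) = f U := by
    refine hf.maskin_monotone rfl fun i t ht => prefers_of_lt ?_
    have hta : t ≠ a := by
      rintro rfl
      exact ht.asymm (hU i t haB _ hw)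
    simp [topTwo, hta, ht.ne.symm, (ne_of_mem_of_not_mem haB hw).symm]
  have hV' : f (fun _ => topTwo a (f U)) = a := hf.eq_of_forall_prefers ha fun i t ht =>
    prefers_of_lt (by simp [topTwo, ht]; split_ifs <;> omega)
  exact hw (by rw [← hV, hV']; exact haB)

theorem decisive_of_eq (hf : StrategyProof f) {U : ι → X → ℕ} (hU : f U = a) (hab : a ≠ b)
    (hS : ∀ i, Prefers (U i) a b → i ∈ S) : Decisive f S a b := by
  refine hf.maskin_monotone hU fun i t ht => prefers_of_lt ?_
  have hta : t ≠ a := ht.ne.symm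
  by_cases hi : i ∈ S
  · simp [pairProfile, hi, topTwo, hta]
    split_ifs <;> omega
  · have htb : t ≠ b := by
      rintro rfl
      exact hi (hS i ht)
    simp [pairProfile, hi, topTwo, hta, htb, hab]

theorem decisive_univ (hf : StrategyProof f) (ha : a ∈ range f) : Decisive f Finset.univ a b :=
  hf.eq_of_forall_prefers ha fun i t ht =>
    prefers_of_lt (by simp [pairProfile, topTwo, ht]; split_ifs <;> omega)

theorem not_decisive_empty (hf : StrategyProof f) (hb : b ∈ range f) (hab : a ≠ b) :
    ¬Decisive f ∅ a b := by
  have : f (pairProfile ∅ a b) = b := hf.eq_of_forall_prefers hb fun i t ht =>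
    prefers_of_lt (by simp [pairProfile, topTwo, ht]; split_ifs <;> omega)
  exact fun h => hab (h.symm.trans this)

theorem decisive_cycle (hf : StrategyProof f) {x y z : X} (hx : x ∈ range f) (hxy : x ≠ y)
    (hyz : y ≠ z) (hxz : x ≠ z) (P Q : Finset ι) :
    Decisive f (P ∪ Q)ᶜ x y ∨ Decisive f P y z ∨ Decisive f Q z x := by
  set G : ι → X → ℕ := fun i =>
    if i ∈ P then topThree y x z else if i ∈ Q then topThree z y x else topThree x z y with hG
  have hGxyz : f G ∈ ({x, y, z} : Set X) := by
    have hpos : ∀ i t, 0 < G i t ↔ t ∈ ({x, y, z} : Set X) := by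
      intro i t
      simp only [hG, mem_insert_iff, mem_singleton_iff]
      split_ifs <;> rw [topThree_pos_iff] <;> tauto
    refine hf.mem_of_forall_prefers_compl (by simp) hx fun i b hb t ht => prefers_of_lt ?_
    exact (not_lt.1 (mt (hpos i t).1 ht)).trans_lt ((hpos i b).2 hb)
  have hvoters : (∀ i, Prefers (G i) x y → i ∈ (P ∪ Q)ᶜ) ∧ (∀ i, Prefers (G i) y z → i ∈ P) ∧
      (∀ i, Prefers (G i) z x → i ∈ Q) := by
    refine ⟨fun i hi => ?_, fun i hi => ?_, fun i hi => ?_⟩ <;>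
    · have := hi.le
      by_cases hP : i ∈ P <;> by_cases hQ : i ∈ Q <;>
        simp [hG, hP, hQ, topThree, hxy, hyz, hxz, hxy.symm, hyz.symm, hxz.symm] at this ⊢
  rcases hGxyz with h | h | h
  exacts [Or.inl (hf.decisive_of_eq h hxy hvoters.1),
    Or.inr (Or.inl (hf.decisive_of_eq h hyz hvoters.2.1)),
    Or.inr (Or.inr (hf.decisive_of_eq h hxz.symm hvoters.2.2))]

theorem decisive_right (hf : StrategyProof f) {c : X} (h : Decisive f S a b) (hb : b ∈ range f)
    (hab : a ≠ b) (hca : c ≠ a) : Decisive f S a c := by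
  rcases eq_or_ne c b with rfl | hcb
  · exact h
  rcases hf.decisive_cycle hb hab.symm hca.symm hcb.symm S ∅ with h' | h' | h'
  · exact absurd (by simpa using h') (h.not_compl hab)
  · exact h'
  · exact absurd h' (hf.not_decisive_empty hb hcb)

theorem decisive_left (hf : StrategyProof f) {c : X} (h : Decisive f S a b) (hb : b ∈ range f)
    (hc : c ∈ range f) (hab : a ≠ b) (hcb : c ≠ b) : Decisive f S c b := by
  rcases eq_or_ne c a with rfl | hca
  · exact h
  rcases hf.decisive_cycle hb hab.symm hca.symm hcb.symm ∅ S with h' | h' | h'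
  · exact absurd (by simpa using h') (h.not_compl hab)
  · exact absurd h' (hf.not_decisive_empty hc hca.symm)
  · exact h'

theorem decisive_of_decisive (hf : StrategyProof f) (hthree : 3 ≤ (range f).ncard)
    (h : Decisive f S a b) (hb : b ∈ range f) (hab : a ≠ b) {c d : X} (hc : c ∈ range f)
    (hcd : c ≠ d) : Decisive f S c d := by
  rcases eq_or_ne c b with rfl | hcb
  · obtain ⟨e, he, hea, hec⟩ := exists_mem_ne_ne_of_three_le_ncard hthree a c
    have hae : Decisive f S a e := hf.decisive_right h hb hab hea
    have hce : Decisive f S c e := hf.decisive_left hae he hb hea.symm hec.symm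
    exact hf.decisive_right hce he hec.symm hcd.symm
  · exact hf.decisive_right (hf.decisive_left h hb hc hab hcb) hb hcb hcd.symm

theorem exists_decisive_singleton (hf : StrategyProof f) (hthree : 3 ≤ (range f).ncard)
    (S : Finset ι) : ∀ a b, b ∈ range f → a ≠ b → Decisive f S a b →
      ∃ i, ∃ a b, b ∈ range f ∧ a ≠ b ∧ Decisive f {i} a b := by
  induction S using Finset.strongInduction with
  | H S ih =>
    intro a b hb hab h
    obtain ⟨i, hi⟩ : S.Nonempty := by
      rw [Finset.nonempty_iff_ne_empty]
      rintro rfl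
      exact hf.not_decisive_empty hb hab h
    obtain ⟨c, hc, hca, hcb⟩ := exists_mem_ne_ne_of_three_le_ncard hthree a b
    rcases hf.decisive_cycle hb hab.symm hca.symm hcb.symm {i} (S.erase i) with h' | h' | h'
    · rw [← Finset.insert_eq, Finset.insert_erase hi] at h'
      exact absurd h' (h.not_compl hab)
    · exact ⟨i, a, c, hc, hca.symm, h'⟩
    · exact ih _ (Finset.erase_ssubset hi) c b hb hcb h'

theorem exists_isDictator (hf : StrategyProof f) (hthree : 3 ≤ (range f).ncard) :
    ∃ i, IsDictator f i := by
  obtain ⟨a, ha⟩ := nonempty_of_ncard_ne_zero (s := range f) (by omega)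
  obtain ⟨b, hb, hba⟩ := exists_ne_of_one_lt_ncard (s := range f) (by omega) a
  obtain ⟨i, c, d, hd, hcd, hi⟩ :=
    hf.exists_decisive_singleton hthree Finset.univ b a ha hba (hf.decisive_univ hb)
  refine ⟨i, fun U e he hpref => ?_⟩
  have hUe : Decisive f {i}ᶜ (f U) e := hf.decisive_of_eq rfl hpref.ne.symm fun j hj => by
    rw [Finset.mem_compl, Finset.mem_singleton]
    rintro rfl
    exact hpref.asymm hj
  exact (hf.decisive_of_decisive hthree hi hd hcd he hpref.ne).not_compl hpref.ne hUe

end StrategyProof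

end SocialChoiceFunction

section GameForm

variable {ι : Type*} [DecidableEq ι] {S : ι → Type*} {X : Type*} {g : (∀ i, S i) → X}

def IsDominant (g : (∀ i, S i) → X) (pref : X → X → Prop) (i : ι) (sᵢ : S i) : Prop :=
  ∀ s, pref (g (update s i sᵢ)) (g s) ∨ g (update s i sᵢ) = g s

theorem apply_eq_of_isDominant_of_top [Fintype ι] {pref : ι → X → X → Prop} {s t : ∀ i, S i}
    {y : X} (hs : g s = y)
    (ht : ∀ j, t j = s j ∨ IsDominant g (pref j) j (t j) ∧ ∀ x, ¬pref j x y) : g t = y := by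
  refine eq_of_forall_update_eq (fun W j hW hWy => ?_) hs
  rcases ht j with hts | ⟨hdom, htop⟩
  · rw [update_eq_self_iff.2]
    · exact hWy
    · rcases hW j with h | h <;> rw [h, hts]
  · rcases hdom W with h | h
    · exact absurd (hWy ▸ h) (htop _)
    · exact h.trans hWy

def directMechanism (g : (∀ i, S i) → X) (σ : ∀ i, (X → ℕ) → S i) : (ι → X → ℕ) → X :=
  fun U => g fun i => σ i (U i)

variable [LinearOrder X] {σ : ∀ i, (X → ℕ) → S i}

theorem strategyProof_directMechanism (hσ : ∀ i u, IsDominant g (Prefers u) i (σ i u)) :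
    StrategyProof (directMechanism g σ) := by
  intro U i u' hgain
  have hdom := hσ i (U i) (update (fun j => σ j (U j)) i (σ i u'))
  rw [update_idem, update_eq_self_iff.2 rfl] at hdom
  have hupd : (fun j => σ j (update U i u' j)) = update (fun j => σ j (U j)) i (σ i u') :=
    funext (apply_update σ U i u')
  simp only [directMechanism, hupd] at hgain
  rcases hdom with h | h
  · exact h.asymm hgain
  · exact hgain.ne h.symm

variable [Fintype ι]

theorem range_directMechanism (hσ : ∀ i u, IsDominant g (Prefers u) i (σ i u)) :
    range (directMechanism g σ) = range g := by
  refine Subset.antisymm (fun _ ⟨U, hU⟩ => ⟨_, hU⟩) ?_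
  rintro y ⟨s, rfl⟩
  exact ⟨fun _ => Pi.single (g s) 1,
    apply_eq_of_isDominant_of_top (g := g) (s := s) rfl fun j =>
      Or.inr ⟨hσ j _, not_prefers_single⟩⟩

theorem apply_update_eq_of_isDictator (hσ : ∀ i u, IsDominant g (Prefers u) i (σ i u)) {i : ι}
    (hi : IsDictator (directMechanism g σ) i) {x : X} (hx : x ∈ range g) (s : ∀ j, S j) :
    g (update s i (σ i (Pi.single x 1))) = x := by
  set y := g (update s i (σ i (Pi.single x 1)))
  set U : ι → X → ℕ := update (fun _ => Pi.single y 1) i (Pi.single x 1)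
  have hUy : directMechanism g σ U = y := by
    refine apply_eq_of_isDominant_of_top (g := g) (pref := fun j => Prefers (U j)) rfl
      fun j => ?_
    rcases eq_or_ne j i with rfl | hj
    · left
      simp [U]
    · right
      simp only [U, update_of_ne hj]
      exact ⟨hσ j _, not_prefers_single⟩
  have hxy : ¬Prefers (Pi.single x 1) x y := by
    simpa [U, hUy] using hi U x (by rwa [range_directMechanism hσ])
  by_contra hne
  exact hxy (prefers_of_lt (by simp [hne]))

end GameForm

end SocialChoice

open SocialChoice

theorem gibbard_1973_straightforward_game_form_is_dictatorial_general
    {X : Type*} {N : ℕ} (S : Fin N → Type*)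
    (g : (∀ i, S i) → X)
    (hstraight : ∀ pref : Fin N → X → X → Prop,
      (∀ i, IsStrictTotalOrder X (pref i)) →
      ∀ i : Fin N, ∃ sistar : S i, ∀ s : ∀ j, S j,
        pref i (g (Function.update s i sistar)) (g s) ∨
          g (Function.update s i sistar) = g s)
    (hrange : 3 ≤ (Set.range g).ncard) :
    ∃ i : Fin N, ∀ x ∈ Set.range g, ∃ si : S i,
      ∀ s : ∀ j, S j, g (Function.update s i si) = x := by
  -- any linear order on `X` serves to break ties between utilities
  let : LinearOrder X := WellOrderingRel.isWellOrder.linearOrder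
  choose σ hσ using fun i (u : X → ℕ) =>
    hstraight (fun _ => Prefers u) (fun _ => isStrictTotalOrder_prefers u) i
  obtain ⟨i, hi⟩ := (strategyProof_directMechanism hσ).exists_isDictator
    (by rwa [range_directMechanism hσ])
  exact ⟨i, fun x hx => ⟨σ i (Pi.single x 1), apply_update_eq_of_isDictator hσ hi hx⟩⟩

/-- Gibbard's 1973 theorem (game-form version). A game form `g` over a finite
outcome set `X` is straightforward if for every profile of strict linear orders
(strict total orders) each player has a dominant strategy. If `g` is
straightforward and its range has at least 3 outcomes, then some player is a
dictator: they can force any outcome in the range of `g` regardless of the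
others' strategies. -/
theorem gibbard_1973_straightforward_game_form_is_dictatorial
    {X : Type*} [Fintype X] {N : ℕ} (S : Fin N → Type*) (hS : ∀ i, Nonempty (S i))
    (g : (∀ i, S i) → X)
    (hstraight : ∀ pref : Fin N → X → X → Prop,
      (∀ i, IsStrictTotalOrder X (pref i)) →
      ∀ i : Fin N, ∃ sistar : S i, ∀ s : ∀ j, S j,
        pref i (g (Function.update s i sistar)) (g s) ∨
          g (Function.update s i sistar) = g s)
    (hrange : 3 ≤ (Set.range g).ncard) :
    ∃ i : Fin N, ∀ x ∈ Set.range g, ∃ si : S i,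
      ∀ s : ∀ j, S j, g (Function.update s i si) = x :=
  gibbard_1973_straightforward_game_form_is_dictatorial_general S g hstraight hrange
end

section
/- (The paper's Theorem 2.) Let Π be a finite set (of deterministic policies/trajectories) with |Π| ≥ 3, and let each of N humans choose a mixed strategy ψ_h, a probability mass function on Π. Let M : (PMF Π)^N → Π be a deterministic mechanism, and for a weight α ∈ (0,1) and utility functions u_h : Π → ℝ define U_h(ψ) = α · E_{x ~ ψ_h}[u_h(x)] + (1 − α) · u_h(M(ψ)). Say (M, α) is straightforward if for every profile of utility functions (u_1, …, u_N), every human h has a dominant strategy ψ_h^* (one maximizing U_h against every profile ψ_{-h} of the others' strategies). Then there exists α_0 > 0 such that for all α with 0 < α < α_0: if (M, α) is straightforward, then either the range of M contains at most two elements (M is a duple), or M is dictatorial, i.e., there exists a human h such that for every x in the range of M there is a strategy ψ_h with M(ψ_h, ψ_{-h}) = x for all ψ_{-h}. -/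
set_option linter.unusedSectionVars false
set_option linter.unusedVariables false

open scoped BigOperators

def mpalUtility {P : Type*} [Fintype P] {N : ℕ}
    (M : (Fin N → PMF P) → P) (α : ℝ) (u : Fin N → P → ℝ)
    (h : Fin N) (ψ : Fin N → PMF P) : ℝ :=
  α * (∑ x : P, ((ψ h) x).toReal * u h x) + (1 - α) * u h (M ψ)

def mpalStraightforward {P : Type*} [Fintype P] {N : ℕ}
    (M : (Fin N → PMF P) → P) (α : ℝ) : Prop :=
  ∀ u : Fin N → P → ℝ, ∀ h : Fin N, ∃ ψstar : PMF P,
    ∀ ψ : Fin N → PMF P,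
      mpalUtility M α u h ψ ≤ mpalUtility M α u h (Function.update ψ h ψstar)

namespace MPAL

variable {P : Type*} [Fintype P] {N : ℕ}

noncomputable def sigma (M : (Fin N → PMF P) → P) (α : ℝ)
    (SF : mpalStraightforward M α) (h : Fin N) (k : P → ℕ) : PMF P :=
  (SF (fun _ x => (k x : ℝ)) h).choose

lemma sigma_spec (M : (Fin N → PMF P) → P) (α : ℝ)
    (SF : mpalStraightforward M α) (h : Fin N) (k : P → ℕ) (ψ : Fin N → PMF P) :
    mpalUtility M α (fun _ x => (k x : ℝ)) h ψ ≤
      mpalUtility M α (fun _ x => (k x : ℝ)) h (Function.update ψ h (sigma M α SF h k)) :=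
  (SF (fun _ x => (k x : ℝ)) h).choose_spec ψ

lemma sum_toReal_one (p : PMF P) : ∑ x : P, (p x).toReal = 1 := by
  have h := PMF.tsum_coe p
  rw [tsum_fintype] at h
  rw [← ENNReal.toReal_sum (fun a _ => PMF.apply_ne_top p a), h, ENNReal.toReal_one]

lemma exp_bounds (p : PMF P) (k : P → ℕ) (hk : ∀ w, k w < Fintype.card P) :
    0 ≤ ∑ x : P, (p x).toReal * (k x : ℝ) ∧
    ∑ x : P, (p x).toReal * (k x : ℝ) ≤ (Fintype.card P : ℝ) - 1 := by
  constructor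
  · exact Finset.sum_nonneg fun x _ => mul_nonneg ENNReal.toReal_nonneg (Nat.cast_nonneg _)
  · calc ∑ x : P, (p x).toReal * (k x : ℝ)
        ≤ ∑ x : P, (p x).toReal * ((Fintype.card P : ℝ) - 1) := by
          apply Finset.sum_le_sum
          intro x _
          apply mul_le_mul_of_nonneg_left _ ENNReal.toReal_nonneg
          have : (k x : ℝ) + 1 ≤ (Fintype.card P : ℝ) := by
            exact_mod_cast Nat.succ_le_of_lt (hk x)
          linarith
      _ = (Fintype.card P : ℝ) - 1 := by
          rw [← Finset.sum_mul, sum_toReal_one, one_mul]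

/-- Key quantitative lemma: for small `α`, the dominant strategy is dominant
in the pure deployment game for bounded integer-valued utilities. -/
lemma pureDom (M : (Fin N → PMF P) → P) (α : ℝ)
    (hα0 : 0 < α) (hαc : α * (Fintype.card P : ℝ) < 1)
    (SF : mpalStraightforward M α) (h : Fin N) (k : P → ℕ)
    (hk : ∀ w, k w < Fintype.card P) (ψ : Fin N → PMF P) :
    k (M ψ) ≤ k (M (Function.update ψ h (sigma M α SF h k))) := by
  by_contra hlt
  push_neg at hlt
  have hspec := sigma_spec M α SF h k ψ
  unfold mpalUtility at hspec
  set ψ' := Function.update ψ h (sigma M α SF h k) with hψ'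
  have hE1 := exp_bounds (ψ h) k hk
  have hE2 := exp_bounds (ψ' h) k hk
  have h1α : (0:ℝ) < 1 - α := by
    have hc1 : (1:ℝ) ≤ (Fintype.card P : ℝ) := by
      have hne : Nonempty P := ⟨M ψ⟩
      have : 1 ≤ Fintype.card P := Fintype.card_pos
      exact_mod_cast this
    nlinarith
  have hgap : (k (M ψ') : ℝ) + 1 ≤ (k (M ψ) : ℝ) := by
    exact_mod_cast Nat.succ_le_of_lt hlt
  -- from hspec : α*E1 + (1-α)*k(Mψ) ≤ α*E2 + (1-α)*k(Mψ')
  nlinarith [hE1.1, hE1.2, hE2.1, hE2.2]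

omit [Fintype P] in
/-- Generic one-coordinate-at-a-time path lemma. -/
lemma pathLemma {A : Type*} (G : (Fin N → A) → P) (a b : Fin N → A) (Q : P → Prop)
    (step : ∀ χ : Fin N → A, (∀ j, χ j = a j ∨ χ j = b j) →
      ∀ i : Fin N, Q (G χ) → Q (G (Function.update χ i (b i))))
    (ha : Q (G a)) : Q (G b) := by
  classical
  let ch : ℕ → Fin N → A := fun n i => if (i : ℕ) < n then b i else a i
  have h0 : ch 0 = a := by
    funext i; simp [ch]
  have hside : ∀ n j, ch n j = a j ∨ ch n j = b j := by
    intro n j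
    by_cases hj : (j : ℕ) < n <;> simp [ch, hj]
  have hall : ∀ n, Q (G (ch n)) := by
    intro n
    induction n with
    | zero => rw [h0]; exact ha
    | succ m ih =>
      by_cases hm : m < N
      · have : ch (m + 1) = Function.update (ch m) ⟨m, hm⟩ (b ⟨m, hm⟩) := by
          funext j
          by_cases hj : j = ⟨m, hm⟩
          · subst hj; simp [ch, Function.update]
          · have hjm : (j : ℕ) ≠ m := by
              intro hc; exact hj (Fin.ext hc)
            have : ((j : ℕ) < m + 1) ↔ ((j : ℕ) < m) := by omega
            simp [ch, Function.update, hj, this]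
        rw [this]
        exact step (ch m) (hside m) ⟨m, hm⟩ ih
      · have : ch (m + 1) = ch m := by
          funext j
          have hj : (j : ℕ) < m ∧ (j : ℕ) < m + 1 := by
            have := j.isLt; omega
          simp [ch, hj.1, hj.2]
        rw [this]; exact ih
  have hN : ch N = b := by
    funext j; simp [ch, j.isLt]
  rw [← hN]; exact hall N


section SCF

variable [DecidableEq P]
variable (M : (Fin N → PMF P) → P) (α : ℝ) (SF : mpalStraightforward M α)

/-- The induced direct social choice function on (ℕ-valued) preference profiles. -/
noncomputable def Fscf (k : Fin N → P → ℕ) : P :=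
  M (fun i => sigma M α SF i (k i))

def Bd (k : P → ℕ) : Prop := ∀ w, k w < Fintype.card P

lemma update_sigma (k : Fin N → P → ℕ) (h : Fin N) (k' : P → ℕ) :
    (fun i => sigma M α SF i (Function.update k h k' i)) =
      Function.update (fun i => sigma M α SF i (k i)) h (sigma M α SF h k') := by
  funext i
  by_cases hi : i = h
  · subst hi; simp
  · simp [Function.update, hi]

lemma switchT (hα0 : 0 < α) (hαc : α * (Fintype.card P : ℝ) < 1) (k : Fin N → P → ℕ) (h : Fin N) (k' : P → ℕ) (hk' : Bd k') :
    k' (Fscf M α SF k) ≤ k' (Fscf M α SF (Function.update k h k')) := by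
  have := pureDom M α hα0 hαc SF h k' hk' (fun i => sigma M α SF i (k i))
  unfold Fscf
  rw [update_sigma]
  exact this

lemma switchO (hα0 : 0 < α) (hαc : α * (Fintype.card P : ℝ) < 1) (k : Fin N → P → ℕ) (h : Fin N) (k' : P → ℕ) (hk : Bd (k h)) :
    k h (Fscf M α SF (Function.update k h k')) ≤ k h (Fscf M α SF k) := by
  have := pureDom M α hα0 hαc SF h (k h) hk
    (Function.update (fun i => sigma M α SF i (k i)) h (sigma M α SF h k'))
  rw [Function.update_idem, Function.update_eq_self] at this
  unfold Fscf
  rw [update_sigma]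
  exact this

lemma Fscf_mem_range (k : Fin N → P → ℕ) : Fscf M α SF k ∈ Set.range M :=
  ⟨_, rfl⟩

end SCF

section Prefs

variable [DecidableEq P]

/-- indicator preference: `x` on top. -/
def chiP (x : P) : P → ℕ := fun w => if w = x then 1 else 0
/-- co-indicator: `x` uniquely at bottom. -/
def chiC (x : P) : P → ℕ := fun w => if w = x then 0 else 1
/-- `x` first, `y` second, rest bottom. -/
def pref2 (x y : P) : P → ℕ := fun w =>
  if w = x then Fintype.card P - 1 else if w = y then Fintype.card P - 2 else 0
/-- `x` first, `y` second, `z` third, rest bottom. -/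
def pref3 (x y z : P) : P → ℕ := fun w =>
  if w = x then Fintype.card P - 1 else if w = y then Fintype.card P - 2
  else if w = z then Fintype.card P - 3 else 0

lemma chiP_bd (hc : 3 ≤ Fintype.card P) (x : P) : Bd (chiP x) := by
  intro w; unfold chiP; split <;> omega

lemma chiC_bd (hc : 3 ≤ Fintype.card P) (x : P) : Bd (chiC x) := by
  intro w; unfold chiC; split <;> omega

lemma pref2_bd (hc : 3 ≤ Fintype.card P) (x y : P) : Bd (pref2 x y) := by
  intro w; unfold pref2; split <;> [skip; split] <;> omega

lemma pref3_bd (hc : 3 ≤ Fintype.card P) (x y z : P) : Bd (pref3 x y z) := by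
  intro w; unfold pref3; split <;> [skip; split] <;> [skip; skip; split] <;> omega

lemma pref2_ge_c1 (hc : 3 ≤ Fintype.card P) {x y w : P} (hyx : y ≠ x)
    (h : Fintype.card P - 1 ≤ pref2 x y w) : w = x := by
  unfold pref2 at h
  split at h
  · assumption
  · split at h <;> omega

lemma pref2_ge_c2 (hc : 3 ≤ Fintype.card P) {x y w : P}
    (h : Fintype.card P - 2 ≤ pref2 x y w) : w = x ∨ w = y := by
  unfold pref2 at h
  split at h
  · left; assumption
  · split at h
    · right; assumption
    · omega

lemma pref3_ge_c2 (hc : 3 ≤ Fintype.card P) {x y z w : P}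
    (h : Fintype.card P - 2 ≤ pref3 x y z w) : w = x ∨ w = y := by
  unfold pref3 at h
  split at h
  · left; assumption
  · split at h
    · right; assumption
    · split at h <;> omega

lemma card_ge_four {x y z w : P} (hxy : x ≠ y) (hxz : x ≠ z) (hyz : y ≠ z)
    (hwx : w ≠ x) (hwy : w ≠ y) (hwz : w ≠ z) : 4 ≤ Fintype.card P := by
  classical
  have hsub : ({x, y, z, w} : Finset P) ⊆ Finset.univ := Finset.subset_univ _
  have hcard : ({x, y, z, w} : Finset P).card = 4 := by
    rw [Finset.card_insert_of_notMem (by simp [hxy, hxz, hwx.symm]),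
        Finset.card_insert_of_notMem (by simp [hyz, hwy.symm]),
        Finset.card_insert_of_notMem (by simp [hwz.symm]),
        Finset.card_singleton]
  calc 4 = ({x, y, z, w} : Finset P).card := hcard.symm
    _ ≤ Finset.univ.card := Finset.card_le_card hsub
    _ = Fintype.card P := rfl

lemma pref3_ge_c3 {x y z w : P} (hxy : x ≠ y) (hxz : x ≠ z) (hyz : y ≠ z)
    (h : Fintype.card P - 3 ≤ pref3 x y z w) : w = x ∨ w = y ∨ w = z := by
  by_contra hw
  push_neg at hw
  obtain ⟨hwx, hwy, hwz⟩ := hw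
  have h4 : 4 ≤ Fintype.card P := card_ge_four hxy hxz hyz hwx hwy hwz
  unfold pref3 at h
  rw [if_neg hwx, if_neg hwy, if_neg hwz] at h
  omega

lemma chiP_self (x : P) : chiP x x = 1 := by simp [chiP]
lemma chiP_ne {x w : P} (h : w ≠ x) : chiP x w = 0 := by simp [chiP, h]
lemma chiP_ge_one {x w : P} (h : 1 ≤ chiP x w) : w = x := by
  by_contra hw; rw [chiP_ne hw] at h; omega
lemma chiC_self (x : P) : chiC x x = 0 := by simp [chiC]
lemma chiC_ne {x w : P} (h : w ≠ x) : chiC x w = 1 := by simp [chiC, h]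
lemma pref2_fst (x y : P) : pref2 x y x = Fintype.card P - 1 := by simp [pref2]
lemma pref2_snd {x y : P} (h : y ≠ x) : pref2 x y y = Fintype.card P - 2 := by
  simp [pref2, h]
lemma pref2_other {x y w : P} (h1 : w ≠ x) (h2 : w ≠ y) : pref2 x y w = 0 := by
  simp [pref2, h1, h2]
lemma pref3_fst (x y z : P) : pref3 x y z x = Fintype.card P - 1 := by simp [pref3]
lemma pref3_snd {x y z : P} (h : y ≠ x) : pref3 x y z y = Fintype.card P - 2 := by
  simp [pref3, h]
lemma pref3_trd {x y z : P} (h1 : z ≠ x) (h2 : z ≠ y) :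
    pref3 x y z z = Fintype.card P - 3 := by simp [pref3, h1, h2]
lemma pref3_other {x y z w : P} (h1 : w ≠ x) (h2 : w ≠ y) (h3 : w ≠ z) :
    pref3 x y z w = 0 := by simp [pref3, h1, h2, h3]

end Prefs

section Core

variable [DecidableEq P]
variable (M : (Fin N → PMF P) → P) (α : ℝ) (SF : mpalStraightforward M α)
variable (hα0 : 0 < α) (hαc : α * (Fintype.card P : ℝ) < 1) (hc : 3 ≤ Fintype.card P)

include hα0 hαc

/-- Unanimity: if `x` is in the range and is everyone's unique top, `x` is chosen. -/
lemma unanimity (x : P) (hx : x ∈ Set.range M) (k : Fin N → P → ℕ)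
    (bd : ∀ i, Bd (k i)) (htop : ∀ i w, w ≠ x → k i w < k i x) :
    Fscf M α SF k = x := by
  obtain ⟨ψ0, hψ0⟩ := hx
  refine pathLemma M ψ0 (fun i => sigma M α SF i (k i)) (fun w => w = x) ?_ hψ0
  intro χ _ i hQ
  show M (Function.update χ i (sigma M α SF i (k i))) = x
  have hp := pureDom M α hα0 hαc SF i (k i) (bd i) χ
  rw [hQ] at hp
  by_contra hne
  exact absurd hp (by have := htop i _ hne; omega)

/-- Monotone path lemma: if each voter either keeps their preference or
switches to one where `v` strictly improves against everything weakly below it,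
then the outcome `v` is preserved. -/
lemma MWP (v : P) (kA kB : Fin N → P → ℕ) (bdA : ∀ i, Bd (kA i)) (bdB : ∀ i, Bd (kB i))
    (hF : Fscf M α SF kA = v)
    (hcond : ∀ i, kB i = kA i ∨
      ∀ w, w ≠ v → kA i w ≤ kA i v → kB i w < kB i v) :
    Fscf M α SF kB = v := by
  refine pathLemma (Fscf M α SF) kA kB (fun w => w = v) ?_ hF
  intro χ hside i hQ
  by_cases hEq : χ i = kB i
  · rw [show Function.update χ i (kB i) = χ by rw [← hEq, Function.update_eq_self]]
    exact hQ
  · have hχ : χ i = kA i := (hside i).resolve_right hEq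
    rcases hcond i with hBA | hcnd
    · exact absurd (hχ.trans hBA.symm) hEq
    · have hO := switchO M α SF hα0 hαc χ i (kB i) (by rw [hχ]; exact bdA i)
      have hT := switchT M α SF hα0 hαc χ i (kB i) (bdB i)
      rw [hQ] at hO hT
      rw [hχ] at hO
      by_contra hne
      have := hcnd _ hne hO
      omega

include hc

/-- Normalization: if `v` is chosen at `k` and everyone in `S` prefers `x` to `v`,
then `v` is still chosen at the canonical profile. -/
lemma normLemma (x v : P) (hxv : x ≠ v) (S : Finset (Fin N)) (k : Fin N → P → ℕ)
    (bd : ∀ i, Bd (k i)) (hS : ∀ i ∈ S, k i v < k i x) (hF : Fscf M α SF k = v) :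
    Fscf M α SF (fun i => if i ∈ S then pref2 x v else chiP v) = v := by
  refine pathLemma (Fscf M α SF) k _ (fun w => w = v) ?_ hF
  intro χ hside i hQ
  by_cases hEq : χ i = if i ∈ S then pref2 x v else chiP v
  · show (fun w => w = v) (Fscf M α SF (Function.update χ i (if i ∈ S then pref2 x v else chiP v)))
    rw [show Function.update χ i _ = χ by rw [← hEq, Function.update_eq_self]]
    exact hQ
  · show (fun w => w = v) (Fscf M α SF (Function.update χ i (if i ∈ S then pref2 x v else chiP v)))
    have hχ : χ i = k i := by
      rcases hside i with h | h
      · exact h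
      · exact absurd h hEq
    have hO := switchO M α SF hα0 hαc χ i (if i ∈ S then pref2 x v else chiP v)
      (by rw [hχ]; exact bd i)
    have hT := switchT M α SF hα0 hαc χ i
      (if i ∈ S then pref2 x v else chiP v) (by
        by_cases hiS : i ∈ S <;> simp only [hiS, if_pos, if_neg, if_true, if_false]
        · exact pref2_bd hc x v
        · exact chiP_bd hc v)
    rw [hQ] at hO hT
    rw [hχ] at hO
    by_cases hiS : i ∈ S
    · simp only [hiS, if_true] at hT hO ⊢
      rw [pref2_snd (Ne.symm hxv)] at hT
      rcases pref2_ge_c2 hc hT with h | h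
      · exfalso
        rw [h] at hO
        have := hS i hiS
        omega
      · exact h
    · simp only [hiS, if_false] at hT hO ⊢
      rw [chiP_self] at hT
      exact chiP_ge_one hT

/-- `S` is decisive for `x` against `y`. -/
def Dec (S : Finset (Fin N)) (x y : P) : Prop :=
  ∀ k : Fin N → P → ℕ, (∀ i, Bd (k i)) → (∀ i ∈ S, k i y < k i x) →
    Fscf M α SF k ≠ y

/-- Pareto: if everyone strictly prefers `x ∈ range M` to `y`, `y` is not chosen. -/
lemma pareto (x y : P) (hx : x ∈ Set.range M) (hxy : x ≠ y)
    (k : Fin N → P → ℕ) (bd : ∀ i, Bd (k i)) (hdom : ∀ i, k i y < k i x) :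
    Fscf M α SF k ≠ y := by
  intro hF
  have hΛ := normLemma M α SF hα0 hαc hc x y hxy Finset.univ k bd
    (fun i _ => hdom i) hF
  simp only [Finset.mem_univ, if_true] at hΛ
  -- path from the all-pref2 profile to the all-chiP-x profile, invariant ≠ x
  have hpath : Fscf M α SF (fun _ => chiP x) ≠ x := by
    refine pathLemma (Fscf M α SF) (fun _ => pref2 x y) (fun _ => chiP x)
      (fun w => w ≠ x) ?_ (by rw [hΛ]; exact fun h => hxy h.symm)
    intro χ hside i hQ
    by_cases hEq : χ i = chiP x
    · rw [show Function.update χ i (chiP x) = χ by rw [← hEq, Function.update_eq_self]]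
      exact hQ
    · have hχ : χ i = pref2 x y := (hside i).resolve_right hEq
      have hO := switchO M α SF hα0 hαc χ i (chiP x) (by rw [hχ]; exact pref2_bd hc x y)
      rw [hχ] at hO
      intro hafter
      rw [hafter, pref2_fst] at hO
      have hbef : pref2 x y (Fscf M α SF χ) ≤ Fintype.card P - 2 := by
        unfold pref2
        rw [if_neg hQ]
        split <;> omega
      omega
  exact hpath (unanimity M α SF hα0 hαc x hx (fun _ => chiP x)
    (fun _ => chiP_bd hc x) (fun i w hw => by
      simp only [chiP_ne hw, chiP_self]; omega))


omit hc in
/-- Pointwise path lemma: walk from profile `kA` to `kB`, with invariant `Q`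
preserved under the switch inequalities. -/
lemma pathPtwise (kA kB : Fin N → P → ℕ) (bdA : ∀ i, Bd (kA i)) (bdB : ∀ i, Bd (kB i))
    (Q : P → Prop) (hstart : Q (Fscf M α SF kA))
    (hstep : ∀ i b a, kA i ≠ kB i → Q b → kA i a ≤ kA i b → kB i b ≤ kB i a → Q a) :
    Q (Fscf M α SF kB) := by
  refine pathLemma (Fscf M α SF) kA kB Q ?_ hstart
  intro χ hside i hQ
  by_cases hEq : χ i = kB i
  · rw [show Function.update χ i (kB i) = χ by rw [← hEq, Function.update_eq_self]]
    exact hQ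
  · have hχ : χ i = kA i := (hside i).resolve_right hEq
    have hO := switchO M α SF hα0 hαc χ i (kB i) (by rw [hχ]; exact bdA i)
    have hT := switchT M α SF hα0 hαc χ i (kB i) (bdB i)
    rw [hχ] at hO
    exact hstep i _ _ (fun h => hEq (hχ.trans h)) hQ hO hT

omit hα0 hαc hc in
lemma bd_ite {f g : P → ℕ} (c : Prop) [Decidable c] (hf : Bd f) (hg : Bd g) :
    Bd (if c then f else g) := by
  by_cases h : c
  · rw [if_pos h]; exact hf
  · rw [if_neg h]; exact hg

/-- Field expansion, type I: decisive for `x` against `z` implies decisive for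
`x` against any `v`. -/
lemma typeI (x z v : P) (hx : x ∈ Set.range M) (hz : z ∈ Set.range M)
    (hxz : x ≠ z) (hvx : v ≠ x) (hvz : v ≠ z) (S : Finset (Fin N))
    (hD : Dec M α SF S x z) : Dec M α SF S x v := by
  intro k bd hdom hF
  -- Normalize
  have hΛ := normLemma M α SF hα0 hαc hc x v (Ne.symm hvx) S k bd hdom hF
  have bdΛ : ∀ i : Fin N, Bd (if i ∈ S then pref2 x v else chiP v) :=
    fun i => bd_ite _ (pref2_bd hc x v) (chiP_bd hc v)
  -- Γ : opponents to pref3 v z x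
  have bdΓ : ∀ i : Fin N, Bd (if i ∈ S then pref2 x v else pref3 v z x) :=
    fun i => bd_ite _ (pref2_bd hc x v) (pref3_bd hc v z x)
  have hΓ : Fscf M α SF (fun i => if i ∈ S then pref2 x v else pref3 v z x) = v := by
    refine MWP M α SF hα0 hαc v _ _ bdΛ bdΓ hΛ ?_
    intro i
    by_cases hiS : i ∈ S
    · left; simp [hiS]
    · right
      simp only [hiS, if_false]
      intro w hw _
      rw [pref3_fst]
      have : pref3 v z x w < Fintype.card P - 1 := by
        unfold pref3
        rw [if_neg hw]
        split
        · omega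
        · split <;> omega
      exact this
  -- Γ'' : S to pref3 x z v, invariant ∈ {z, v}
  have bdΓ'' : ∀ i : Fin N, Bd (if i ∈ S then pref3 x z v else pref3 v z x) :=
    fun i => bd_ite _ (pref3_bd hc x z v) (pref3_bd hc v z x)
  have hΓ'' : (fun w => w = z ∨ w = v)
      (Fscf M α SF (fun i => if i ∈ S then pref3 x z v else pref3 v z x)) := by
    refine pathPtwise M α SF hα0 hαc _ _ bdΓ bdΓ'' (fun w => w = z ∨ w = v) (Or.inr hΓ) ?_
    intro i b a hne hQ h1 h2
    by_cases hiS : i ∈ S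
    · simp only [hiS, if_true] at h1 h2
      rcases hQ with hb | hb <;> rw [hb] at h1 h2
      · -- before = z
        rw [pref2_other (Ne.symm hxz) hvz.symm] at h1
        rw [pref3_snd hxz.symm] at h2
        rcases pref3_ge_c2 hc h2 with h | h
        · exfalso; rw [h, pref2_fst] at h1; omega
        · exact Or.inl h
      · -- before = v
        rw [pref2_snd hvx] at h1
        rw [pref3_trd hvx hvz] at h2
        rcases pref3_ge_c3 hxz (Ne.symm hvx) (Ne.symm hvz) h2 with h | h | h
        · exfalso; rw [h, pref2_fst] at h1; omega
        · exact Or.inl h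
        · exact Or.inr h
    · exfalso; exact hne (by simp [hiS])
  have hΓ''v : Fscf M α SF (fun i => if i ∈ S then pref3 x z v else pref3 v z x) = v := by
    rcases hΓ'' with h | h
    · exfalso
      refine hD _ bdΓ'' ?_ h
      intro i hiS
      simp only [hiS, if_true]
      rw [pref3_fst, pref3_snd hxz.symm]
      omega
    · exact h
  -- Δ : opponents to pref2 z v, invariant ∈ {z, v}
  have bdΔ : ∀ i : Fin N, Bd (if i ∈ S then pref3 x z v else pref2 z v) :=
    fun i => bd_ite _ (pref3_bd hc x z v) (pref2_bd hc z v)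
  have hΔ : (fun w => w = z ∨ w = v)
      (Fscf M α SF (fun i => if i ∈ S then pref3 x z v else pref2 z v)) := by
    refine pathPtwise M α SF hα0 hαc _ _ bdΓ'' bdΔ (fun w => w = z ∨ w = v) (Or.inr hΓ''v) ?_
    intro i b a hne hQ h1 h2
    by_cases hiS : i ∈ S
    · exfalso; exact hne (by simp [hiS])
    · simp only [hiS, if_false] at h1 h2
      rcases hQ with hb | hb <;> rw [hb] at h1 h2
      · -- before = z
        rw [pref3_snd hvz.symm] at h1
        rw [pref2_fst] at h2
        have := pref2_ge_c1 hc hvz h2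
        exact Or.inl this
      · -- before = v
        rw [pref2_snd hvz] at h2
        rcases pref2_ge_c2 hc h2 with h | h
        · exact Or.inl h
        · exact Or.inr h
  have hΔv : Fscf M α SF (fun i => if i ∈ S then pref3 x z v else pref2 z v) = v := by
    rcases hΔ with h | h
    · exfalso
      refine hD _ bdΔ ?_ h
      intro i hiS
      simp only [hiS, if_true]
      rw [pref3_fst, pref3_snd hxz.symm]
      omega
    · exact h
  -- Pareto: everyone prefers z to v
  refine pareto M α SF hα0 hαc hc z v hz (Ne.symm hvz) _ bdΔ ?_ hΔv
  intro i
  by_cases hiS : i ∈ S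
  · simp only [hiS, if_true]
    rw [pref3_snd hxz.symm, pref3_trd hvx hvz]
    omega
  · simp only [hiS, if_false]
    rw [pref2_fst, pref2_snd hvz]
    omega

/-- Field expansion, type II: decisive for `x` against `y` implies `u` decisive
against `y`, for `u` in the range. -/
lemma typeII (x y u : P) (hu : u ∈ Set.range M) (hxy : x ≠ y)
    (hux : u ≠ x) (huy : u ≠ y) (S : Finset (Fin N))
    (hD : Dec M α SF S x y) : Dec M α SF S u y := by
  intro k bd hdom hF
  have hΛ := normLemma M α SF hα0 hαc hc u y huy S k bd hdom hF
  have bdΛ : ∀ i : Fin N, Bd (if i ∈ S then pref2 u y else chiP y) :=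
    fun i => bd_ite _ (pref2_bd hc u y) (chiP_bd hc y)
  have bdΓ : ∀ i : Fin N, Bd (if i ∈ S then pref2 u y else pref3 y u x) :=
    fun i => bd_ite _ (pref2_bd hc u y) (pref3_bd hc y u x)
  have hΓ : Fscf M α SF (fun i => if i ∈ S then pref2 u y else pref3 y u x) = y := by
    refine MWP M α SF hα0 hαc y _ _ bdΛ bdΓ hΛ ?_
    intro i
    by_cases hiS : i ∈ S
    · left; simp [hiS]
    · right
      simp only [hiS, if_false]
      intro w hw _
      rw [pref3_fst]
      unfold pref3
      rw [if_neg hw]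
      split
      · omega
      · split <;> omega
  -- Δ : S to pref3 u x y, invariant ∈ {x, y}
  have bdΔ : ∀ i : Fin N, Bd (if i ∈ S then pref3 u x y else pref3 y u x) :=
    fun i => bd_ite _ (pref3_bd hc u x y) (pref3_bd hc y u x)
  have hΔ : (fun w => w = x ∨ w = y)
      (Fscf M α SF (fun i => if i ∈ S then pref3 u x y else pref3 y u x)) := by
    refine pathPtwise M α SF hα0 hαc _ _ bdΓ bdΔ (fun w => w = x ∨ w = y) (Or.inr hΓ) ?_
    intro i b a hne hQ h1 h2
    by_cases hiS : i ∈ S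
    · simp only [hiS, if_true] at h1 h2
      rcases hQ with hb | hb <;> rw [hb] at h1 h2
      · -- before = x
        rw [pref2_other hux.symm hxy] at h1
        rw [pref3_snd hux.symm] at h2
        rcases pref3_ge_c2 hc h2 with h | h
        · exfalso; rw [h, pref2_fst] at h1; omega
        · exact Or.inl h
      · -- before = y
        rw [pref2_snd huy.symm] at h1
        rw [pref3_trd (Ne.symm huy) (Ne.symm hxy)] at h2
        rcases pref3_ge_c3 hux huy hxy h2 with h | h | h
        · exfalso; rw [h, pref2_fst] at h1; omega
        · exact Or.inl h
        · exact Or.inr h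
    · exfalso; exact hne (by simp [hiS])
  have hΔx : Fscf M α SF (fun i => if i ∈ S then pref3 u x y else pref3 y u x) = x := by
    rcases hΔ with h | h
    · exact h
    · exfalso
      refine hD _ bdΔ ?_ h
      intro i hiS
      simp only [hiS, if_true]
      rw [pref3_snd hux.symm, pref3_trd (Ne.symm huy) (Ne.symm hxy)]
      omega
  -- Pareto: everyone prefers u to x
  refine pareto M α SF hα0 hαc hc u x hu hux _ bdΔ ?_ hΔx
  intro i
  by_cases hiS : i ∈ S
  · simp only [hiS, if_true]
    rw [pref3_fst, pref3_snd hux.symm]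
    omega
  · simp only [hiS, if_false]
    rw [pref3_snd huy, pref3_trd hxy (Ne.symm hux)]
    omega


/-- Full field expansion: decisiveness on one pair spreads to all pairs. -/
lemma expansion (x z t : P) (hx : x ∈ Set.range M) (hz : z ∈ Set.range M)
    (ht : t ∈ Set.range M) (hxz : x ≠ z) (hxt : x ≠ t) (hzt : z ≠ t)
    (S : Finset (Fin N)) (hD : Dec M α SF S x z) :
    ∀ a ∈ Set.range M, ∀ b, b ≠ a → Dec M α SF S a b := by
  intro a ha b hba
  by_cases hax : a = x
  · rw [hax] at hba ⊢
    by_cases hbz : b = z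
    · rw [hbz]; exact hD
    · exact typeI M α SF hα0 hαc hc x z b hx hz hxz hba hbz S hD
  · by_cases haz : a = z
    · rw [haz] at hba ⊢
      have hDxt : Dec M α SF S x t :=
        typeI M α SF hα0 hαc hc x z t hx hz hxz (Ne.symm hxt) (Ne.symm hzt) S hD
      have hDzt : Dec M α SF S z t :=
        typeII M α SF hα0 hαc hc x t z hz hxt (Ne.symm hxz) hzt S hDxt
      by_cases hbt : b = t
      · rw [hbt]; exact hDzt
      · exact typeI M α SF hα0 hαc hc z t b hz ht hzt hba hbt S hDzt
    · have hDaz : Dec M α SF S a z :=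
        typeII M α SF hα0 hαc hc x z a ha hxz hax haz S hD
      by_cases hbz : b = z
      · rw [hbz]; exact hDaz
      · exact typeI M α SF hα0 hαc hc a z b ha hz haz hba hbz S hDaz

omit hα0 hαc hc in
lemma pref3_mem_ge {x y z w : P} (hyx : y ≠ x) (hzx : z ≠ x) (hzy : z ≠ y)
    (h : w = x ∨ w = y ∨ w = z) : Fintype.card P - 3 ≤ pref3 x y z w := by
  rcases h with h | h | h <;> rw [h]
  · rw [pref3_fst]; omega
  · rw [pref3_snd hyx]; omega
  · rw [pref3_trd hzx hzy]

/-- Contraction: a decisive coalition splits into a decisive part. -/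
lemma contraction (x y z : P) (hx : x ∈ Set.range M) (hy : y ∈ Set.range M)
    (hz : z ∈ Set.range M) (hxy : x ≠ y) (hxz : x ≠ z) (hyz : y ≠ z)
    (S S1 S2 : Finset (Fin N)) (hdisj : Disjoint S1 S2) (hunion : S1 ∪ S2 = S)
    (hDS : ∀ a ∈ Set.range M, ∀ b, b ≠ a → Dec M α SF S a b) :
    (∀ a ∈ Set.range M, ∀ b, b ≠ a → Dec M α SF S1 a b) ∨
    (∀ a ∈ Set.range M, ∀ b, b ≠ a → Dec M α SF S2 a b) := by
  set khat : Fin N → P → ℕ := fun i =>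
    if i ∈ S1 then pref3 x y z else if i ∈ S2 then pref3 y z x else pref3 z x y
    with hkhat
  have bdhat : ∀ i, Bd (khat i) := fun i =>
    bd_ite _ (pref3_bd hc x y z) (bd_ite _ (pref3_bd hc y z x) (pref3_bd hc z x y))
  -- (1) outcome among {x, y, z}
  have h1 : (fun w => w = x ∨ w = y ∨ w = z) (Fscf M α SF khat) := by
    refine pathPtwise M α SF hα0 hαc (fun _ => chiP x) khat
      (fun _ => chiP_bd hc x) bdhat (fun w => w = x ∨ w = y ∨ w = z)
      (Or.inl (unanimity M α SF hα0 hαc x hx _ (fun _ => chiP_bd hc x)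
        (fun i w hw => by simp only [chiP_ne hw, chiP_self]; omega))) ?_
    intro i b a hne hQ hO hT
    have hble : Fintype.card P - 3 ≤ khat i b := by
      simp only [hkhat]
      split
      · exact pref3_mem_ge (Ne.symm hxy) (Ne.symm hxz) (Ne.symm hyz) hQ
      · split
        · refine pref3_mem_ge (Ne.symm hyz) hxy hxz ?_
          tauto
        · refine pref3_mem_ge hxz hyz (Ne.symm hxy) ?_
          tauto
    have hale : Fintype.card P - 3 ≤ khat i a := le_trans hble hT
    simp only [hkhat] at hale
    split at hale
    · exact pref3_ge_c3 hxy hxz hyz hale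
    · split at hale
      · have := pref3_ge_c3 hyz (Ne.symm hxy) (Ne.symm hxz) hale
        tauto
      · have := pref3_ge_c3 (Ne.symm hxz) (Ne.symm hyz) hxy hale
        tauto
  -- (2) outcome is not z
  have h2 : Fscf M α SF khat ≠ z := by
    refine hDS y hy z (Ne.symm hyz) khat bdhat ?_
    intro i hiS
    rw [← hunion] at hiS
    rcases Finset.mem_union.mp hiS with hi1 | hi2
    · simp only [hkhat, hi1, if_true]
      rw [pref3_snd (Ne.symm hxy), pref3_trd (Ne.symm hxz) (Ne.symm hyz)]
      omega
    · have hn1 : i ∉ S1 := fun h => (Finset.disjoint_left.mp hdisj h) hi2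
      simp only [hkhat, hn1, hi2, if_true, if_false]
      rw [pref3_fst, pref3_snd (Ne.symm hyz)]
      omega
  rcases h1 with hw | hw | hw
  · -- outcome x : S1 decisive
    left
    have hΘ : Fscf M α SF (fun i => if i ∈ S1 then chiP x else pref3 z x y) = x := by
      refine MWP M α SF hα0 hαc x khat _ bdhat
        (fun i => bd_ite _ (chiP_bd hc x) (pref3_bd hc z x y)) hw ?_
      intro i
      by_cases hi1 : i ∈ S1
      · right
        simp only [hkhat, hi1, if_true]
        intro w hwx _
        rw [chiP_ne hwx, chiP_self]; omega
      · by_cases hi2 : i ∈ S2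
        · right
          simp only [hkhat, hi1, hi2, if_true, if_false]
          intro w hwx hle
          rw [pref3_trd hxy hxz] at hle
          rw [pref3_snd hxz]
          by_cases hwy : w = y
          · rw [hwy, pref3_fst] at hle; omega
          · by_cases hwz : w = z
            · rw [hwz, pref3_snd (Ne.symm hyz)] at hle; omega
            · rw [pref3_other hwy hwz hwx] at hle
              rw [pref3_other hwz hwx hwy]
              omega
        · left; simp [hkhat, hi1, hi2]
    have hD1 : Dec M α SF S1 x z := by
      intro k' bd' hdom' hF'
      have hΛ := normLemma M α SF hα0 hαc hc x z hxz S1 k' bd' hdom' hF'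
      have bdΛ : ∀ i : Fin N, Bd (if i ∈ S1 then pref2 x z else chiP z) :=
        fun i => bd_ite _ (pref2_bd hc x z) (chiP_bd hc z)
      have bdΓ : ∀ i : Fin N, Bd (if i ∈ S1 then pref2 x z else pref3 z x y) :=
        fun i => bd_ite _ (pref2_bd hc x z) (pref3_bd hc z x y)
      have hΓz : Fscf M α SF (fun i => if i ∈ S1 then pref2 x z else pref3 z x y) = z := by
        refine MWP M α SF hα0 hαc z _ _ bdΛ bdΓ hΛ ?_
        intro i
        by_cases hi1 : i ∈ S1
        · left; simp [hi1]
        · right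
          simp only [hi1, if_false]
          intro w hwz _
          rw [pref3_fst]
          have : pref3 z x y w < Fintype.card P - 1 := by
            unfold pref3
            rw [if_neg hwz]
            split
            · omega
            · split <;> omega
          exact this
      have hΓx : Fscf M α SF (fun i => if i ∈ S1 then pref2 x z else pref3 z x y) = x := by
        refine MWP M α SF hα0 hαc x _ _
          (fun i => bd_ite _ (chiP_bd hc x) (pref3_bd hc z x y)) bdΓ hΘ ?_
        intro i
        by_cases hi1 : i ∈ S1
        · right
          simp only [hi1, if_true]
          intro w hwx _
          rw [pref2_fst]
          have : pref2 x z w < Fintype.card P - 1 := by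
            unfold pref2
            rw [if_neg hwx]
            split <;> omega
          exact this
        · left; simp [hi1]
      rw [hΓz] at hΓx
      exact absurd hΓx (Ne.symm hxz)
    exact expansion M α SF hα0 hαc hc x z y hx hz hy hxz hxy (Ne.symm hyz) S1 hD1
  · -- outcome y : S2 decisive
    right
    have hΘ : Fscf M α SF (fun i => if i ∈ S2 then chiP y else pref3 x y z) = y := by
      refine MWP M α SF hα0 hαc y khat _ bdhat
        (fun i => bd_ite _ (chiP_bd hc y) (pref3_bd hc x y z)) hw ?_
      intro i
      by_cases hi2 : i ∈ S2
      · right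
        have hn1 : i ∉ S1 := fun h => (Finset.disjoint_left.mp hdisj h) hi2
        simp only [hkhat, hn1, hi2, if_true, if_false]
        intro w hwy _
        rw [chiP_ne hwy, chiP_self]; omega
      · by_cases hi1 : i ∈ S1
        · left; simp [hkhat, hi1, hi2]
        · right
          simp only [hkhat, hi1, hi2, if_false]
          intro w hwy hle
          rw [pref3_trd hyz (Ne.symm hxy)] at hle
          rw [pref3_snd (Ne.symm hxy)]
          by_cases hwz : w = z
          · rw [hwz, pref3_fst] at hle; omega
          · by_cases hwx : w = x
            · rw [hwx, pref3_snd hxz] at hle; omega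
            · rw [pref3_other hwz hwx hwy] at hle
              rw [pref3_other hwx hwy hwz]
              omega
    have hD2 : Dec M α SF S2 y x := by
      intro k' bd' hdom' hF'
      have hΛ := normLemma M α SF hα0 hαc hc y x (Ne.symm hxy) S2 k' bd' hdom' hF'
      have bdΛ : ∀ i : Fin N, Bd (if i ∈ S2 then pref2 y x else chiP x) :=
        fun i => bd_ite _ (pref2_bd hc y x) (chiP_bd hc x)
      have bdΓ : ∀ i : Fin N, Bd (if i ∈ S2 then pref2 y x else pref3 x y z) :=
        fun i => bd_ite _ (pref2_bd hc y x) (pref3_bd hc x y z)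
      have hΓx : Fscf M α SF (fun i => if i ∈ S2 then pref2 y x else pref3 x y z) = x := by
        refine MWP M α SF hα0 hαc x _ _ bdΛ bdΓ hΛ ?_
        intro i
        by_cases hi2 : i ∈ S2
        · left; simp [hi2]
        · right
          simp only [hi2, if_false]
          intro w hwx _
          rw [pref3_fst]
          have : pref3 x y z w < Fintype.card P - 1 := by
            unfold pref3
            rw [if_neg hwx]
            split
            · omega
            · split <;> omega
          exact this
      have hΓy : Fscf M α SF (fun i => if i ∈ S2 then pref2 y x else pref3 x y z) = y := by
        refine MWP M α SF hα0 hαc y _ _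
          (fun i => bd_ite _ (chiP_bd hc y) (pref3_bd hc x y z)) bdΓ hΘ ?_
        intro i
        by_cases hi2 : i ∈ S2
        · right
          simp only [hi2, if_true]
          intro w hwy _
          rw [pref2_fst]
          have : pref2 y x w < Fintype.card P - 1 := by
            unfold pref2
            rw [if_neg hwy]
            split <;> omega
          exact this
        · left; simp [hi2]
      rw [hΓx] at hΓy
      exact absurd hΓy hxy
    exact expansion M α SF hα0 hαc hc y x z hy hx hz (Ne.symm hxy) hyz hxz S2 hD2
  · exact absurd hw h2


/-- Descent: there is a single decisive individual. -/
lemma descent (x y z : P) (hx : x ∈ Set.range M) (hy : y ∈ Set.range M)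
    (hz : z ∈ Set.range M) (hxy : x ≠ y) (hxz : x ≠ z) (hyz : y ≠ z) :
    ∃ h : Fin N, ∀ a ∈ Set.range M, ∀ b, b ≠ a → Dec M α SF {h} a b := by
  suffices H : ∀ n (S : Finset (Fin N)), S.card = n →
      (∀ a ∈ Set.range M, ∀ b, b ≠ a → Dec M α SF S a b) →
      ∃ h : Fin N, ∀ a ∈ Set.range M, ∀ b, b ≠ a → Dec M α SF {h} a b by
    refine H Finset.univ.card Finset.univ rfl ?_
    intro a ha b hba k bd hdom
    exact pareto M α SF hα0 hαc hc a b ha (Ne.symm hba) k bd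
      (fun i => hdom i (Finset.mem_univ i))
  intro n
  induction n using Nat.strong_induction_on with
  | _ n IH =>
    intro S hcard hS
    rcases Finset.eq_empty_or_nonempty S with hemp | hne
    · exfalso
      refine hS x hx y (Ne.symm hxy) (fun _ => chiP y) (fun _ => chiP_bd hc y) ?_ ?_
      · intro i hi
        rw [hemp] at hi
        exact absurd hi (Finset.notMem_empty i)
      · exact unanimity M α SF hα0 hαc y hy _ (fun _ => chiP_bd hc y)
          (fun i w hw => by simp only [chiP_ne hw, chiP_self]; omega)
    · obtain ⟨t, ht⟩ := hne
      by_cases hone : S.card = 1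
      · obtain ⟨h0, hh0⟩ := Finset.card_eq_one.mp hone
        exact ⟨h0, hh0 ▸ hS⟩
      · have hsplit := contraction M α SF hα0 hαc hc x y z hx hy hz hxy hxz hyz
          S {t} (S.erase t)
          (by simp [Finset.disjoint_singleton_left])
          (by simpa using Finset.insert_erase ht) hS
        rcases hsplit with h | h
        · exact ⟨t, h⟩
        · refine IH (S.erase t).card ?_ (S.erase t) rfl h
          rw [← hcard]
          exact Finset.card_erase_lt_of_mem ht

end Core

end MPAL

/-- The paper's Theorem 2: for sufficiently small learning-phase weight `α`,
any straightforward deterministic mechanism over at least 3 possible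
policies/trajectories is either a duple (range restricted to two outcomes) or a
dictatorship. -/
theorem mpal_straightforward_duple_or_dictatorial
    {P : Type*} [Fintype P] (hP : 3 ≤ Fintype.card P)
    (N : ℕ) (M : (Fin N → PMF P) → P) :
    ∃ α₀ : ℝ, 0 < α₀ ∧ ∀ α : ℝ, 0 < α → α < α₀ →
      mpalStraightforward M α →
        (∃ x y : P, Set.range M ⊆ {x, y}) ∨
        (∃ h : Fin N, ∀ x ∈ Set.range M, ∃ ψh : PMF P,
          ∀ ψ : Fin N → PMF P, M (Function.update ψ h ψh) = x) := by
  classical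
  have hcpos : (0:ℝ) < (Fintype.card P : ℝ) := by
    have : 0 < Fintype.card P := by omega
    exact_mod_cast this
  refine ⟨(Fintype.card P : ℝ)⁻¹, inv_pos.mpr hcpos, ?_⟩
  intro α hα0 hα1 SF
  have hαc : α * (Fintype.card P : ℝ) < 1 := by
    calc α * (Fintype.card P : ℝ) < (Fintype.card P : ℝ)⁻¹ * (Fintype.card P : ℝ) :=
          mul_lt_mul_of_pos_right hα1 hcpos
      _ = 1 := inv_mul_cancel₀ (ne_of_gt hcpos)
  by_cases hdup : ∃ x y : P, Set.range M ⊆ {x, y}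
  · exact Or.inl hdup
  · right
    push_neg at hdup
    have hPne : Nonempty P := Fintype.card_pos_iff.mp (by omega)
    have hdom_ne : Nonempty (Fin N → PMF P) := ⟨fun _ => PMF.pure (Classical.arbitrary P)⟩
    obtain ⟨x, hx⟩ := Set.range_nonempty M
    obtain ⟨y, hy, hyx⟩ := Set.not_subset.mp (hdup x x)
    obtain ⟨z, hz, hzxy⟩ := Set.not_subset.mp (hdup x y)
    have hyx' : y ≠ x := by simpa using hyx
    have hzx' : z ≠ x := by
      intro h; exact hzxy (by simp [h])
    have hzy' : z ≠ y := by
      intro h; exact hzxy (by simp [h])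
    obtain ⟨h, hDh⟩ := MPAL.descent M α SF hα0 hαc hP x y z hx hy hz
      (Ne.symm hyx') hzx'.symm hzy'.symm
    refine ⟨h, ?_⟩
    intro x0 hx0
    refine ⟨MPAL.sigma M α SF h (MPAL.chiP x0), ?_⟩
    intro ψ
    -- the dictator pins down x0 at the canonical adversarial profile
    have hWin : MPAL.Fscf M α SF
        (fun i => if i = h then MPAL.chiP x0 else MPAL.chiC x0) = x0 := by
      by_contra hne
      refine hDh x0 hx0 _ hne (fun i => if i = h then MPAL.chiP x0 else MPAL.chiC x0)
        (fun i => MPAL.bd_ite _ (MPAL.chiP_bd hP x0) (MPAL.chiC_bd hP x0)) ?_ rfl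
      intro i hi
      rw [Finset.mem_singleton] at hi
      simp only [hi, if_true]
      rw [MPAL.chiP_ne hne, MPAL.chiP_self]
      omega
    -- transport along arbitrary opponent strategies
    by_contra hne
    have hpath := MPAL.pathLemma M (Function.update ψ h (MPAL.sigma M α SF h (MPAL.chiP x0)))
      (fun i => MPAL.sigma M α SF i (if i = h then MPAL.chiP x0 else MPAL.chiC x0))
      (fun w => w ≠ x0) ?_ hne
    · exact hpath hWin
    · intro χ hside i hQ
      by_cases hih : i = h
      · subst hih
        have hχ : χ i = MPAL.sigma M α SF i (MPAL.chiP x0) := by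
          rcases hside i with hs | hs
          · rw [hs, Function.update_self]
          · rw [hs]; simp
        show M (Function.update χ i
          (MPAL.sigma M α SF i (if i = i then MPAL.chiP x0 else MPAL.chiC x0))) ≠ x0
        have hii : (if i = i then MPAL.chiP x0 else MPAL.chiC x0) = MPAL.chiP x0 := by simp
        rw [hii, ← hχ, Function.update_eq_self]
        exact hQ
      · show M (Function.update χ i
          (MPAL.sigma M α SF i (if i = h then MPAL.chiP x0 else MPAL.chiC x0))) ≠ x0
        rw [if_neg hih]
        have hp := MPAL.pureDom M α hα0 hαc SF i (MPAL.chiC x0) (MPAL.chiC_bd hP x0) χ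
        intro heq
        rw [heq, MPAL.chiC_self] at hp
        rw [MPAL.chiC_ne hQ] at hp
        omega
end

section
/- (The paper's multi-human Ω(T) lower-bound theorem.) There exist a number of arms M, reward functions r_1, r_2 : Fin M → ℝ with r_h(a) ≥ 0 for all a and Σ_a r_h(a) = 1 for h = 1, 2, and a constant δ > 0, such that every arm a lying in argmax r_1 ∪ argmax r_2 satisfies w(a) ≤ w* − δ, where w(a) = (r_1(a) + r_2(a))/2 is the social welfare of arm a and w* = max_b w(b). Consequently, in the β → ∞ limit where each human only ever pulls their own optimal arms during an exploration phase of length T_0 < T, any explore-then-commit strategy that commits to an arm pulled during exploration incurs cumulative social-welfare regret Σ_{t = T_0}^{T−1} (w* − w(commit)) ≥ δ·(T − T_0), which is Ω(T). -/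
/-! Two humans with rewards `(3/5, 0, 2/5)` and `(0, 3/5, 2/5)` each strictly prefer their own
arm, whose social welfare is `3/10`, while the shared third arm, which neither of them ever pulls,
has welfare `2/5`. So every arm pulled during exploration loses `1/10` of welfare in each of the
`T - T₀` committed rounds. -/

open Finset

theorem mul_sub_le_sum_Ico_const {R : Type*} [CommRing R] [PartialOrder R] [IsOrderedRing R]
    {δ c : R} {T₀ T : ℕ} (hT : T₀ ≤ T) (hδc : δ ≤ c) :
    δ * ((T : R) - T₀) ≤ ∑ _t ∈ Ico T₀ T, c := by
  rw [sum_const, Nat.card_Ico, nsmul_eq_mul, Nat.cast_sub hT, mul_comm]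
  exact mul_le_mul_of_nonneg_left hδc (sub_nonneg.2 (Nat.mono_cast hT))

namespace CompromiseArm

noncomputable def reward₁ : Fin 3 → ℝ := ![3/5, 0, 2/5]

noncomputable def reward₂ : Fin 3 → ℝ := ![0, 3/5, 2/5]

theorem reward₁_nonneg (a : Fin 3) : 0 ≤ reward₁ a := by
  fin_cases a <;> norm_num [reward₁]

theorem reward₂_nonneg (a : Fin 3) : 0 ≤ reward₂ a := by
  fin_cases a <;> norm_num [reward₂]

theorem sum_reward₁ : ∑ a, reward₁ a = 1 := by
  simp [reward₁, Fin.sum_univ_three]; norm_num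

theorem sum_reward₂ : ∑ a, reward₂ a = 1 := by
  simp [reward₂, Fin.sum_univ_three]; norm_num

theorem isGreatest_welfare :
    IsGreatest (Set.range fun a => (reward₁ a + reward₂ a) / 2) (2/5) := by
  refine ⟨⟨2, by simp [reward₁, reward₂]⟩, ?_⟩
  rintro _ ⟨a, rfl⟩
  fin_cases a <;> norm_num [reward₁, reward₂]

theorem eq_zero_of_forall_reward₁_le {a : Fin 3} (ha : ∀ b, reward₁ b ≤ reward₁ a) : a = 0 := by
  have h₀ := ha 0
  revert h₀
  fin_cases a <;> norm_num [reward₁]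

theorem eq_one_of_forall_reward₂_le {a : Fin 3} (ha : ∀ b, reward₂ b ≤ reward₂ a) : a = 1 := by
  have h₁ := ha 1
  revert h₁
  fin_cases a <;> norm_num [reward₂]

theorem welfare_le_of_optimal {a : Fin 3}
    (ha : (∀ b, reward₁ b ≤ reward₁ a) ∨ (∀ b, reward₂ b ≤ reward₂ a)) :
    (reward₁ a + reward₂ a) / 2 ≤ 2/5 - 1/10 := by
  rcases ha with ha | ha
  · rw [eq_zero_of_forall_reward₁_le ha]; norm_num [reward₁, reward₂]
  · rw [eq_one_of_forall_reward₂_le ha]; norm_num [reward₁, reward₂]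

end CompromiseArm

open CompromiseArm in
/-- Multi-human bandit assistance game, Ω(T) lower bound: there exist two
normalized reward profiles and a gap δ > 0 such that every arm that is optimal
for either human is δ-suboptimal in social welfare `w(a) = (r₁(a) + r₂(a))/2`.
Consequently, any explore-then-commit strategy committing to an arm pulled
during exploration (in the β → ∞ limit, an arm in argmax r₁ ∪ argmax r₂)
incurs cumulative social-welfare regret at least `δ·(T − T₀)`, i.e. Ω(T). -/
theorem multi_human_explore_then_commit_linear_regret :
    ∃ (M : ℕ) (r1 r2 : Fin M → ℝ) (δ wstar : ℝ),
      0 < δ ∧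
      (∀ a, 0 ≤ r1 a) ∧ (∀ a, 0 ≤ r2 a) ∧
      (∑ a, r1 a = 1) ∧ (∑ a, r2 a = 1) ∧
      IsGreatest (Set.range fun a => (r1 a + r2 a) / 2) wstar ∧
      (∀ a : Fin M, ((∀ b, r1 b ≤ r1 a) ∨ (∀ b, r2 b ≤ r2 a)) →
        (r1 a + r2 a) / 2 ≤ wstar - δ) ∧
      (∀ T T0 : ℕ, T0 ≤ T → ∀ commit : Fin M,
        ((∀ b, r1 b ≤ r1 commit) ∨ (∀ b, r2 b ≤ r2 commit)) →
        δ * ((T : ℝ) - (T0 : ℝ)) ≤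
          ∑ _t ∈ Finset.Ico T0 T, (wstar - (r1 commit + r2 commit) / 2)) :=
  ⟨3, reward₁, reward₂, 1/10, 2/5, by norm_num, reward₁_nonneg, reward₂_nonneg, sum_reward₁,
    sum_reward₂, isGreatest_welfare, fun _ => welfare_le_of_optimal,
    fun _ _ hT _ hcommit =>
      mul_sub_le_sum_Ico_const hT (le_sub_comm.1 (welfare_le_of_optimal hcommit))⟩
end

section
/- (The paper's truthfulness-dominance theorem.) Let r : Fin M → ℝ be a human's reward function with 0 ≤ r(a) ≤ 1 for all a, let r* = max_a r(a), assume there is at least one suboptimal arm, and let Δ = min{r* − r(a) : r(a) < r*} > 0 be the minimal suboptimality gap. Fix γ ∈ (0,1) and an exploration length T with T·(1−γ)·Δ > r*. Then for every demonstration sequence a : Fin T → Fin M whose fraction of optimal pulls is below γ, i.e., |{t : r(a(t)) = r*}| < γ·T, it holds that Σ_{t < T} r(a(t)) + r* < T·r*. In particular, since the exploitation phase consists of a single robot pull with reward in [0, r*] and a truthful sequence (all pulls optimal) earns at least T·r* from the exploration phase alone, any strategy with truthfulness γ_h < γ is strictly dominated by a truthful strategy. -/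
open Finset

theorem Finset.sum_le_card_mul_sub_of_gap {ι : Type*} (s : Finset ι) (f : ι → ℝ) (c Δ : ℝ)
    (hle : ∀ i ∈ s, f i ≤ c) (hgap : ∀ i ∈ s, f i ≠ c → f i ≤ c - Δ) :
    ∑ i ∈ s, f i ≤ s.card * c - {i ∈ s | f i ≠ c}.card * Δ := by
  calc ∑ i ∈ s, f i ≤ ∑ i ∈ s, (c - if f i ≠ c then Δ else 0) := by
        refine sum_le_sum fun i hi => ?_
        split_ifs with h
        · exact hgap i hi h
        · simpa using hle i hi
    _ = s.card * c - {i ∈ s | f i ≠ c}.card * Δ := by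
        rw [sum_sub_distrib, sum_ite, sum_const_zero, sum_const, sum_const]
        simp only [nsmul_eq_mul, add_zero]

theorem le_sub_of_ne_of_isLeast_gap {α : Type*} (r : α → ℝ) {rstar Δ : ℝ}
    (hstar : IsGreatest (Set.range r) rstar)
    (hΔ : IsLeast {d : ℝ | ∃ a, r a < rstar ∧ d = rstar - r a} Δ) {x : α}
    (hx : r x ≠ rstar) :
    r x ≤ rstar - Δ := by
  have hlt : r x < rstar := lt_of_le_of_ne (hstar.2 ⟨x, rfl⟩) hx
  linarith [hΔ.2 ⟨x, hlt, rfl⟩]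

theorem untruthful_strategy_strictly_dominated_general
    (M : ℕ) (r : Fin M → ℝ)
    (rstar : ℝ) (hstar : IsGreatest (Set.range r) rstar)
    (Δ : ℝ) (hΔ : IsLeast {d : ℝ | ∃ a, r a < rstar ∧ d = rstar - r a} Δ)
    (γ : ℝ)
    (T : ℕ) (hT : (T : ℝ) * (1 - γ) * Δ > rstar)
    (a : Fin T → Fin M)
    (huntruth :
      ((({t : Fin T | r (a t) = rstar} : Finset (Fin T)).card : ℝ) < γ * T)) :
    (∑ t : Fin T, r (a t)) + rstar < (T : ℝ) * rstar := by
  have hsum := sum_le_card_mul_sub_of_gap univ (fun t => r (a t)) rstar Δ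
    (fun t _ => hstar.2 ⟨a t, rfl⟩) (fun t _ => le_sub_of_ne_of_isLeast_gap r hstar hΔ)
  have hcard : ({t : Fin T | r (a t) = rstar} : Finset (Fin T)).card
      + ({t : Fin T | r (a t) ≠ rstar} : Finset (Fin T)).card = T := by
    simpa using card_filter_add_card_filter_not (s := univ) (fun t => r (a t) = rstar)
  have hΔ0 : 0 ≤ Δ := by
    obtain ⟨b, hb, hΔb⟩ := hΔ.1
    linarith
  -- at least `(1 - γ) T` rounds are suboptimal, and each of them loses at least `Δ`
  have hloss : (T : ℝ) * (1 - γ) * Δ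
      ≤ ({t : Fin T | r (a t) ≠ rstar} : Finset (Fin T)).card * Δ := by
    refine mul_le_mul_of_nonneg_right ?_ hΔ0
    have := congrArg (Nat.cast (R := ℝ)) hcard
    push_cast at this
    linarith
  simp only [card_univ, Fintype.card_fin] at hsum
  linarith

/-- Truthfulness-dominance theorem: with rewards in [0,1], minimal
suboptimality gap Δ, and exploration length T satisfying `T·(1−γ)·Δ > r*`,
any demonstration sequence whose fraction of optimal pulls is below γ earns
strictly less, even after adding the best possible exploitation reward `r*`,
than `T·r*` — the amount a truthful sequence earns from exploration alone.
Hence any strategy with truthfulness below γ is strictly dominated by a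
truthful one. -/
theorem untruthful_strategy_strictly_dominated
    (M : ℕ) (r : Fin M → ℝ) (h01 : ∀ a, 0 ≤ r a ∧ r a ≤ 1)
    (rstar : ℝ) (hstar : IsGreatest (Set.range r) rstar)
    (hsub : ∃ a, r a < rstar)
    (Δ : ℝ) (hΔ : IsLeast {d : ℝ | ∃ a, r a < rstar ∧ d = rstar - r a} Δ)
    (hΔpos : 0 < Δ)
    (γ : ℝ) (hγ0 : 0 < γ) (hγ1 : γ < 1)
    (T : ℕ) (hT : (T : ℝ) * (1 - γ) * Δ > rstar)
    (a : Fin T → Fin M)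
    (huntruth :
      ((({t : Fin T | r (a t) = rstar} : Finset (Fin T)).card : ℝ) < γ * T)) :
    (∑ t : Fin T, r (a t)) + rstar < (T : ℝ) * rstar :=
  untruthful_strategy_strictly_dominated_general M r rstar hstar Δ hΔ γ T hT a huntruth
end

section
/- (The paper's Corollary on plurality voting with shared control.) Let u : Fin M → ℝ be a human's utility with 0 ≤ u(a) for all a, u* = max_a u(a) < C, a unique maximizer a*, and u* − u(a) > ε for every a ≠ a*. Suppose the demonstration length satisfies T > 2C/ε. Then for every demonstration sequence a : Fin T → Fin M for which some arm m ≠ a* has pull count at least that of a* (i.e., the human's modal arm is not a*), one has Σ_{t < T} u(a(t)) ≤ T·u* − (T/2)·ε < T·u* − C. Consequently, in plurality voting with shared control—where the human's total utility is Σ_{t < T} u(a(t)) plus u evaluated at the robot's arm a_R, and changing the robot's arm can change the human's utility by at most C—the truthful strategy of always pulling a* is a dominant strategy; hence for T > 2C/ε the mechanism is dominant-strategy incentive-compatible on the domain D_{ε,C}, while being non-dictatorial and not limiting the possible outcomes to two alternatives. -/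
open Finset

/-- Corollary on plurality voting with shared control: if the human's utility
lies in the domain D_{ε,C} (nonnegative, unique maximizer `astar` with value
`u* < C` and gap `> ε` to every other arm) and the demonstration length
satisfies `T > 2C/ε`, then any demonstration sequence whose modal arm is not
`astar` earns at most `T·u* − (T/2)·ε < T·u* − C` in the exploration phase;
hence, whatever arm the robot pulls in either scenario (whose utility lies in
`[0, u*] ⊆ [0, C)`), such a sequence is strictly outperformed by the truthful
sequence of always pulling `astar`: truthfulness is a dominant strategy, so
the mechanism is dominant-strategy incentive-compatible on D_{ε,C}. -/
theorem plurality_shared_control_truthful_dominant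
    (M : ℕ) (u : Fin M → ℝ) (hnn : ∀ a, 0 ≤ u a)
    (astar : Fin M) (hmax : ∀ a, u a ≤ u astar)
    (C ε : ℝ) (hε : 0 < ε) (hC : u astar < C)
    (hgap : ∀ a, a ≠ astar → u astar - u a > ε)
    (T : ℕ) (hT : (T : ℝ) > 2 * C / ε)
    (a : Fin T → Fin M)
    (m : Fin M) (hm : m ≠ astar)
    (hcount :
      ({t : Fin T | a t = astar} : Finset (Fin T)).card ≤
        ({t : Fin T | a t = m} : Finset (Fin T)).card) :
    ((∑ t : Fin T, u (a t)) ≤ (T : ℝ) * u astar - ((T : ℝ) / 2) * ε) ∧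
    ((T : ℝ) * u astar - ((T : ℝ) / 2) * ε < (T : ℝ) * u astar - C) ∧
    (∀ aR aRtruth : Fin M,
      (∑ t : Fin T, u (a t)) + u aR <
        (∑ _t : Fin T, u astar) + u aRtruth) := by
  classical
  have hTC : C < (T : ℝ) / 2 * ε := by
    have := (div_lt_iff₀ hε).mp hT
    nlinarith
  set S : Finset (Fin T) := ({t : Fin T | a t = astar} : Finset (Fin T)) with hS
  set Sm : Finset (Fin T) := ({t : Fin T | a t = m} : Finset (Fin T)) with hSm
  have hdisj : Disjoint S Sm := by
    rw [Finset.disjoint_left]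
    intro t ht htm
    simp [hS, hSm] at ht htm
    exact hm (htm.symm.trans ht)
  have hcard2 : 2 * S.card ≤ T := by
    have h1 : S.card + Sm.card ≤ T := by
      rw [← Finset.card_union_of_disjoint hdisj]
      calc (S ∪ Sm).card ≤ (Finset.univ : Finset (Fin T)).card :=
            Finset.card_le_card (Finset.subset_univ _)
        _ = T := by simp
    omega
  have hsum : (∑ t : Fin T, u (a t)) ≤ (T : ℝ) * u astar - ((T : ℝ) / 2) * ε := by
    have hsplit : (∑ t : Fin T, u (a t)) =
        (∑ t ∈ S, u (a t)) + (∑ t ∈ Sᶜ, u (a t)) :=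
      (Finset.sum_add_sum_compl S _).symm
    have h1 : (∑ t ∈ S, u (a t)) ≤ S.card * u astar := by
      have := Finset.sum_le_card_nsmul S (fun t => u (a t)) (u astar)
        (fun t _ => hmax _)
      simpa [nsmul_eq_mul] using this
    have h2 : (∑ t ∈ Sᶜ, u (a t)) ≤ Sᶜ.card * (u astar - ε) := by
      have key : ∀ t ∈ Sᶜ, u (a t) ≤ u astar - ε := by
        intro t ht
        have : a t ≠ astar := by
          simp [hS, Finset.mem_compl] at ht
          simpa [hS] using ht
        linarith [hgap _ this]
      have := Finset.sum_le_card_nsmul Sᶜ (fun t => u (a t)) (u astar - ε) key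
      simpa [nsmul_eq_mul] using this
    have hcc : (Sᶜ.card : ℝ) = T - S.card := by
      have := Finset.card_compl S
      simp only [Fintype.card_fin] at this
      rw [this, Nat.cast_sub (by simpa using Finset.card_le_univ S)]
    have hhalf : ((T : ℝ) / 2) ≤ (Sᶜ.card : ℝ) := by
      rw [hcc]
      have : (2 * S.card : ℝ) ≤ T := by exact_mod_cast hcard2
      linarith
    have hεnn : 0 ≤ ε := le_of_lt hε
    calc (∑ t : Fin T, u (a t)) ≤ S.card * u astar + Sᶜ.card * (u astar - ε) := by
          rw [hsplit]; exact add_le_add h1 h2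
      _ = (S.card + Sᶜ.card : ℝ) * u astar - Sᶜ.card * ε := by ring
      _ = (T : ℝ) * u astar - Sᶜ.card * ε := by
          rw [hcc]; ring
      _ ≤ (T : ℝ) * u astar - ((T : ℝ) / 2) * ε := by nlinarith
  refine ⟨hsum, by linarith, fun aR aRtruth => ?_⟩
  have h3 : (∑ _t : Fin T, u astar) = (T : ℝ) * u astar := by
    simp [Finset.sum_const, mul_comm]
  calc (∑ t : Fin T, u (a t)) + u aR
      ≤ ((T : ℝ) * u astar - ((T : ℝ) / 2) * ε) + u astar := by
        linarith [hmax aR]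
    _ < (T : ℝ) * u astar - C + C := by linarith
    _ = (T : ℝ) * u astar := by ring
    _ ≤ (∑ _t : Fin T, u astar) + u aRtruth := by
        rw [h3]; linarith [hnn aRtruth]
end

section
/- (Inclusion part of the paper's Theorem on manipulable profiles.) Consider plurality voting with random tiebreak with 3 voters and 3 alternatives. Each voter h has a utility u_h in the 2-simplex {u ∈ ℝ³ : u ≥ 0, u_0 + u_1 + u_2 = 1}. Given announcements b = (b_1, b_2, b_3) ∈ (Fin 3)³, let W(b) be the set of alternatives with maximal vote count and e_h(b) = (1/|W(b)|)·Σ_{x ∈ W(b)} u_h(x). In the announcing game, voter h's payoff is A_h(b) = e_h(b); in the demonstrating game with exploration time equal to exploitation time, it is D_h(b) = u_h(b_h) + e_h(b). A profile u_h is manipulable for voter h in a game G if there exist announcements b_{-h} of the others and an announcement b_h ∉ argmax u_h such that G_h(b_h, b_{-h}) > G_h(b*, b_{-h}) for every b* ∈ argmax u_h. Then every profile u_h that is manipulable in the demonstrating game is also manipulable in the announcing game: the set of profiles manipulable by demonstrating is included in the set of profiles manipulable by announcing. -/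
open Finset

/-- Number of voters announcing alternative `x` in profile `b`. -/
def voteCount (b : Fin 3 → Fin 3) (x : Fin 3) : ℕ :=
  ({h : Fin 3 | b h = x} : Finset (Fin 3)).card

/-- The plurality winners: alternatives with maximal vote count. -/
def winners (b : Fin 3 → Fin 3) : Finset (Fin 3) :=
  ({x : Fin 3 | ∀ y : Fin 3, voteCount b y ≤ voteCount b x} : Finset (Fin 3))

/-- Expected utility of the uniform lottery over the plurality winners. -/
noncomputable def lotteryValue (u : Fin 3 → ℝ) (b : Fin 3 → Fin 3) : ℝ :=
  (∑ x ∈ winners b, u x) / ((winners b).card : ℝ)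

/-- Payoff of voter `h` in the announcing game. -/
noncomputable def announcePayoff (u : Fin 3 → ℝ) (_h : Fin 3) (b : Fin 3 → Fin 3) : ℝ :=
  lotteryValue u b

/-- Payoff of voter `h` in the demonstrating game (exploration time equal to
exploitation time): the utility of the arm they pull themselves plus the
expected utility of the outcome lottery. -/
noncomputable def demoPayoff (u : Fin 3 → ℝ) (h : Fin 3) (b : Fin 3 → Fin 3) : ℝ :=
  u (b h) + lotteryValue u b

/-- `u` is manipulable for voter `h` in the game with payoffs `G`: against some
announcements of the others, some untruthful announcement (not in `argmax u`)
strictly outperforms every truthful one. -/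
def manipulable (G : (Fin 3 → ℝ) → Fin 3 → (Fin 3 → Fin 3) → ℝ)
    (u : Fin 3 → ℝ) (h : Fin 3) : Prop :=
  ∃ (b : Fin 3 → Fin 3) (d : Fin 3), (¬ ∀ y, u y ≤ u d) ∧
    ∀ t : Fin 3, (∀ y, u y ≤ u t) →
      G u h (Function.update b h t) < G u h (Function.update b h d)

/- ------------------- auxiliary lemmas ------------------- -/

lemma fin3_cover : ∀ p q r t : Fin 3, p ≠ q → p ≠ r → q ≠ r → t = p ∨ t = q ∨ t = r := by
  decide

lemma fin3_third : ∀ p q r t : Fin 3,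
    (p ≠ q ∧ p ≠ r ∧ q ≠ r ∧ t ≠ p ∧ t ≠ q) → t = r := by
  decide

lemma fin3_exists_third : ∀ p q : Fin 3, p ≠ q → ∃ r, p ≠ r ∧ q ≠ r := by
  decide

lemma fin3_all_cases : ∀ h : Fin 3, h = 0 ∨ h = 1 ∨ h = 2 := by decide

lemma W_two : ∀ p q : Fin 3, p ≠ q →
    winners ![p,p,q] = {p} ∧ winners ![p,q,p] = {p} ∧ winners ![q,p,p] = {p} := by
  decide

lemma W_three : ∀ p q r : Fin 3, p ≠ q → p ≠ r → q ≠ r → winners ![p,q,r] = Finset.univ := by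
  decide

lemma W_one : ∀ x p : Fin 3,
    winners ![x,p,p] = {p} ∧ winners ![p,x,p] = {p} ∧ winners ![p,p,x] = {p} := by
  decide

lemma lottery_of_singleton (u : Fin 3 → ℝ) (b : Fin 3 → Fin 3) (p : Fin 3)
    (hw : winners b = {p}) : lotteryValue u b = u p := by
  simp [lotteryValue, hw]

lemma lottery_of_univ (u : Fin 3 → ℝ) (hsum : ∑ x, u x = 1) (b : Fin 3 → Fin 3)
    (hw : winners b = Finset.univ) : lotteryValue u b = 1/3 := by
  rw [lotteryValue, hw, hsum]
  simp

lemma upd0 (b : Fin 3 → Fin 3) (x : Fin 3) :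
    Function.update b 0 x = ![x, b 1, b 2] := by
  funext i; fin_cases i <;> simp [Function.update]

lemma upd1 (b : Fin 3 → Fin 3) (x : Fin 3) :
    Function.update b 1 x = ![b 0, x, b 2] := by
  funext i; fin_cases i <;> simp [Function.update]

lemma upd2 (b : Fin 3 → Fin 3) (x : Fin 3) :
    Function.update b 2 x = ![b 0, b 1, x] := by
  funext i; fin_cases i <;> simp [Function.update]

/-- Core argument in the case where the deviation `d` equals one of the two
distinct votes of the other voters (here `d = p`). -/
lemma key_dp (u : Fin 3 → ℝ) (p q r : Fin 3) (hpq : p ≠ q) (hpr : p ≠ r) (hqr : q ≠ r)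
    (L : Fin 3 → ℝ) (hLp : L p = u p) (hLq : L q = u q) (hLr : L r = 1/3)
    (t0 : Fin 3) (ht0 : ∀ y, u y ≤ u t0) (h3 : 1/3 ≤ u t0)
    (hdp : u p < u t0)
    (hb : ∀ t, (∀ y, u y ≤ u t) → u t + L t < u p + L p) :
    ∃ d', (¬ ∀ y, u y ≤ u d') ∧ ∀ t, (∀ y, u y ≤ u t) → L t < L d' := by
  have hq' : ¬ ∀ y, u y ≤ u q := by
    intro hq
    have h1 := hb q hq
    rw [hLq, hLp] at h1
    have h2 := hq p
    linarith
  have hqlt : u q < u t0 := by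
    push_neg at hq'
    obtain ⟨y, hy⟩ := hq'
    exact lt_of_lt_of_le hy (ht0 y)
  have ht0r : t0 = r := by
    refine fin3_third p q r t0 ⟨hpq, hpr, hqr, ?_, ?_⟩
    · intro hh; rw [hh] at hdp; exact lt_irrefl _ hdp
    · intro hh; rw [hh] at hqlt; exact lt_irrefl _ hqlt
  have hineq := hb t0 ht0
  rw [ht0r, hLr, hLp] at hineq
  have hup : u p ≤ u r := ht0r ▸ ht0 p
  have h13 : 1/3 < u p := by linarith
  have hpltr : u p < u r := ht0r ▸ hdp
  have hqltr : u q < u r := ht0r ▸ hqlt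
  refine ⟨p, ?_, ?_⟩
  · push_neg
    exact ⟨r, hpltr⟩
  · intro t ht
    have htr : t = r := by
      refine fin3_third p q r t ⟨hpq, hpr, hqr, ?_, ?_⟩
      · intro hh; rw [hh] at ht; have := ht r; linarith
      · intro hh; rw [hh] at ht; have := ht r; linarith
    rw [htr, hLr, hLp]
    exact h13

/-- Core argument: demo-manipulation against two distinct other votes `p, q`
yields an announce-manipulation. -/
lemma key (u : Fin 3 → ℝ) (p q r : Fin 3) (hpq : p ≠ q) (hpr : p ≠ r) (hqr : q ≠ r)
    (L : Fin 3 → ℝ) (hLp : L p = u p) (hLq : L q = u q) (hLr : L r = 1/3)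
    (t0 : Fin 3) (ht0 : ∀ y, u y ≤ u t0) (h3 : 1/3 ≤ u t0)
    (d : Fin 3) (hd : u d < u t0)
    (hb : ∀ t, (∀ y, u y ≤ u t) → u t + L t < u d + L d) :
    ∃ d', (¬ ∀ y, u y ≤ u d') ∧ ∀ t, (∀ y, u y ≤ u t) → L t < L d' := by
  rcases fin3_cover p q r d hpq hpr hqr with hh | hh | hh
  · rw [hh] at hd hb
    exact key_dp u p q r hpq hpr hqr L hLp hLq hLr t0 ht0 h3 hd hb
  · rw [hh] at hd hb
    exact key_dp u q p r (Ne.symm hpq) hqr hpr L hLq hLp hLr t0 ht0 h3 hd hb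
  · exfalso
    have hi := hb t0 ht0
    rw [hh, hLr] at hi
    have hdr : u r < u t0 := hh ▸ hd
    rcases fin3_cover p q r t0 hpq hpr hqr with h1 | h1 | h1
    · rw [h1, hLp] at hi
      have h3' : 1/3 ≤ u p := h1 ▸ h3
      have : u r < u p := h1 ▸ hdr
      linarith
    · rw [h1, hLq] at hi
      have h3' : 1/3 ≤ u q := h1 ▸ h3
      have : u r < u q := h1 ▸ hdr
      linarith
    · rw [h1, hLr] at hi
      linarith

/-- Inclusion part of the paper's Theorem: every profile on the 2-simplex that
is manipulable in the demonstrating game is also manipulable in the announcing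
game. -/
theorem demo_manipulable_subset_announce_manipulable
    (u : Fin 3 → ℝ) (hnn : ∀ x, 0 ≤ u x) (hsum : ∑ x, u x = 1) (h : Fin 3) :
    manipulable demoPayoff u h → manipulable announcePayoff u h := by
  rintro ⟨b, d, hd, hb⟩
  obtain ⟨t0, ht0⟩ := Finite.exists_max u
  have h3 : 1/3 ≤ u t0 := by
    have hs := hsum
    rw [Fin.sum_univ_three] at hs
    linarith [ht0 0, ht0 1, ht0 2]
  have hdlt : u d < u t0 := by
    push_neg at hd
    obtain ⟨y, hy⟩ := hd
    exact lt_of_lt_of_le hy (ht0 y)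
  have hbL : ∀ t, (∀ y, u y ≤ u t) →
      u t + lotteryValue u (Function.update b h t) <
      u d + lotteryValue u (Function.update b h d) := by
    intro t ht
    have h1 := hb t ht
    simpa [demoPayoff, Function.update_self] using h1
  rcases fin3_all_cases h with hh | hh | hh
  · subst hh
    by_cases hpq : b 1 = b 2
    · exfalso
      have e1 : ∀ x, lotteryValue u (Function.update b 0 x) = u (b 2) := by
        intro x
        rw [upd0, hpq]
        exact lottery_of_singleton u _ _ (W_one x (b 2)).1
      have h1 := hbL t0 ht0
      rw [e1 t0, e1 d] at h1
      linarith
    · obtain ⟨r, hpr, hqr⟩ := fin3_exists_third (b 1) (b 2) hpq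
      have hLp : lotteryValue u (Function.update b 0 (b 1)) = u (b 1) := by
        rw [upd0]
        exact lottery_of_singleton u _ _ (W_two (b 1) (b 2) hpq).1
      have hLq : lotteryValue u (Function.update b 0 (b 2)) = u (b 2) := by
        rw [upd0]
        exact lottery_of_singleton u _ _ (W_two (b 2) (b 1) (Ne.symm hpq)).2.1
      have hLr : lotteryValue u (Function.update b 0 r) = 1/3 := by
        rw [upd0]
        exact lottery_of_univ u hsum _ (W_three r (b 1) (b 2) (Ne.symm hpr) (Ne.symm hqr) hpq)
      obtain ⟨d', hd', hwin⟩ := key u (b 1) (b 2) r hpq hpr hqr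
        (fun x => lotteryValue u (Function.update b 0 x)) hLp hLq hLr
        t0 ht0 h3 d hdlt (fun t ht => hbL t ht)
      exact ⟨b, d', hd', fun t ht => hwin t ht⟩
  · subst hh
    by_cases hpq : b 0 = b 2
    · exfalso
      have e1 : ∀ x, lotteryValue u (Function.update b 1 x) = u (b 2) := by
        intro x
        rw [upd1, hpq]
        exact lottery_of_singleton u _ _ (W_one x (b 2)).2.1
      have h1 := hbL t0 ht0
      rw [e1 t0, e1 d] at h1
      linarith
    · obtain ⟨r, hpr, hqr⟩ := fin3_exists_third (b 0) (b 2) hpq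
      have hLp : lotteryValue u (Function.update b 1 (b 0)) = u (b 0) := by
        rw [upd1]
        exact lottery_of_singleton u _ _ (W_two (b 0) (b 2) hpq).1
      have hLq : lotteryValue u (Function.update b 1 (b 2)) = u (b 2) := by
        rw [upd1]
        exact lottery_of_singleton u _ _ (W_two (b 2) (b 0) (Ne.symm hpq)).2.2
      have hLr : lotteryValue u (Function.update b 1 r) = 1/3 := by
        rw [upd1]
        exact lottery_of_univ u hsum _ (W_three (b 0) r (b 2) hpr hpq (Ne.symm hqr))
      obtain ⟨d', hd', hwin⟩ := key u (b 0) (b 2) r hpq hpr hqr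
        (fun x => lotteryValue u (Function.update b 1 x)) hLp hLq hLr
        t0 ht0 h3 d hdlt (fun t ht => hbL t ht)
      exact ⟨b, d', hd', fun t ht => hwin t ht⟩
  · subst hh
    by_cases hpq : b 0 = b 1
    · exfalso
      have e1 : ∀ x, lotteryValue u (Function.update b 2 x) = u (b 1) := by
        intro x
        rw [upd2, hpq]
        exact lottery_of_singleton u _ _ (W_one x (b 1)).2.2
      have h1 := hbL t0 ht0
      rw [e1 t0, e1 d] at h1
      linarith
    · obtain ⟨r, hpr, hqr⟩ := fin3_exists_third (b 0) (b 1) hpq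
      have hLp : lotteryValue u (Function.update b 2 (b 0)) = u (b 0) := by
        rw [upd2]
        exact lottery_of_singleton u _ _ (W_two (b 0) (b 1) hpq).2.1
      have hLq : lotteryValue u (Function.update b 2 (b 1)) = u (b 1) := by
        rw [upd2]
        exact lottery_of_singleton u _ _ (W_two (b 1) (b 0) (Ne.symm hpq)).2.2
      have hLr : lotteryValue u (Function.update b 2 r) = 1/3 := by
        rw [upd2]
        exact lottery_of_univ u hsum _ (W_three (b 0) (b 1) r hpq hpr hqr)
      obtain ⟨d', hd', hwin⟩ := key u (b 0) (b 1) r hpq hpr hqr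
        (fun x => lotteryValue u (Function.update b 2 x)) hLp hLq hLr
        t0 ht0 h3 d hdlt (fun t ht => hbL t ht)
      exact ⟨b, d', hd', fun t ht => hwin t ht⟩
end
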